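/- arXiv:1708.09373 — 11 statements merged into one kernel-verified Lean document; each statement's English description precedes it below -/
import Mathlib

section
/- Let K be a field, N ≥ 2 an integer, and α, β ∈ K. Suppose τ : ℤ → K satisfies τ_n ≠ 0 for all n, and the sequence u_n := τ_{n+3}τ_n/(τ_{n+2}τ_{n+1}) satisfies the generalized DTKQ equation of order N with parameters α, β for all n ∈ ℤ. Then the quantity γ_n := (τ_{n+N+2}τ_n − α·τ_{n+N}τ_{n+2})/(τ_{n+N+1}τ_{n+1}) is 2-periodic, i.e. γ_{n+2} = γ_n for all n ∈ ℤ; equivalently, τ satisfies the bilinear equation τ_{n+N+2}τ_n = γ_n·τ_{n+N+1}τ_{n+1} + α·τ_{n+N}τ_{n+2} with a 2-periodic coefficient γ_n. -/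
/-!
With `u = tauSubst τ`, the product in the DTKQ equation telescopes to
`P n = τ (n+N+2) τ (n+1) / (τ (n+N) τ (n+3))`, so the equation reads `S n + β = α / P n` for the
window sum `S n = u n + ⋯ + u (n+N)`. Since `S (n+1) - S n = u (n+N+1) - u n`, the quantity
`u n - α / P n` equals `u (n+N+1) - α / P (n+1)`. In terms of `τ` these two expressions are
`c n * γ n` and `c n * γ (n+2)` with the same nonzero factor `c n`, whence `γ (n+2) = γ n`.
-/

open Finset

theorem sum_range_shift_sub {G : Type*} [AddCommGroup G] (f : ℤ → G) (n : ℤ) (m : ℕ) :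
    ∑ j ∈ range m, f (n + 1 + j) - ∑ j ∈ range m, f (n + j) = f (n + m) - f n := by
  rw [← sum_sub_distrib]
  convert sum_range_sub (fun j : ℕ => f (n + j)) m using 2 <;> push_cast <;> ring_nf

section TauSubstitution

variable {K : Type*} [Field K] {τ : ℤ → K}

def tauSubst (τ : ℤ → K) (n : ℤ) : K :=
  τ (n + 3) * τ n / (τ (n + 2) * τ (n + 1))

def bilinearCoeff (α : K) (N : ℕ) (τ : ℤ → K) (n : ℤ) : K :=
  (τ (n + N + 2) * τ n - α * (τ (n + N) * τ (n + 2))) / (τ (n + N + 1) * τ (n + 1))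

theorem prod_range_tauSubst (hτ : ∀ n, τ n ≠ 0) (n : ℤ) (M : ℕ) :
    ∏ k ∈ range M, tauSubst τ (n + k + 1) =
      τ (n + M + 3) * τ (n + 1) / (τ (n + M + 1) * τ (n + 3)) := by
  induction M with
  | zero => simp [mul_comm, hτ]
  | succ M ih =>
    rw [prod_range_succ, ih, tauSubst]
    push_cast
    field_simp [hτ]
    ring_nf

theorem eq_of_mul_prod_range_tauSubst_eq (hτ : ∀ n, τ n ≠ 0) (n : ℤ) {N : ℕ} (hN : 1 ≤ N)
    {s α : K} (h : s * ∏ k ∈ range (N - 1), tauSubst τ (n + k + 1) = α) :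
    s = α * (τ (n + N) * τ (n + 3)) / (τ (n + N + 2) * τ (n + 1)) := by
  rw [prod_range_tauSubst hτ, Nat.cast_sub hN, Nat.cast_one,
    show n + (N - 1 : ℤ) + 3 = n + N + 2 by ring, show n + (N - 1 : ℤ) + 1 = n + N by ring] at h
  rw [← h]
  field_simp [hτ]

theorem tauSubst_sub_eq_mul_bilinearCoeff (hτ : ∀ n, τ n ≠ 0) (α : K) (N : ℕ) (n : ℤ) :
    tauSubst τ n - α * (τ (n + N) * τ (n + 3)) / (τ (n + N + 2) * τ (n + 1)) =
      τ (n + 3) * τ (n + N + 1) / (τ (n + 2) * τ (n + N + 2)) * bilinearCoeff α N τ n := by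
  unfold tauSubst bilinearCoeff
  field_simp [hτ]

theorem tauSubst_add_sub_eq_mul_bilinearCoeff_add_two (hτ : ∀ n, τ n ≠ 0) (α : K) (N : ℕ)
    (n : ℤ) :
    tauSubst τ (n + N + 1) -
        α * (τ (n + 1 + N) * τ (n + 1 + 3)) / (τ (n + 1 + N + 2) * τ (n + 1 + 1)) =
      τ (n + 3) * τ (n + N + 1) / (τ (n + 2) * τ (n + N + 2)) * bilinearCoeff α N τ (n + 2) := by
  unfold tauSubst bilinearCoeff
  field_simp [hτ]
  ring_nf

end TauSubstitution

/-- the tau substitution into the generalized DTKQ equation of order `N`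
yields the bilinear equation with a 2-periodic coefficient `γ`. -/
theorem dtkq_tau_gives_bilinear {K : Type*} [Field K] (N : ℕ) (hN : 2 ≤ N) (α β : K)
    (τ : ℤ → K) (hτ : ∀ n, τ n ≠ 0)
    (u : ℤ → K) (hu : ∀ n : ℤ, u n = τ (n + 3) * τ n / (τ (n + 2) * τ (n + 1)))
    (hDTKQ : ∀ n : ℤ,
      ((∑ j ∈ Finset.range (N + 1), u (n + j)) + β) *
        (∏ k ∈ Finset.range (N - 1), u (n + k + 1)) = α)
    (γ : ℤ → K)
    (hγ : ∀ n : ℤ, γ n =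
      (τ (n + N + 2) * τ n - α * (τ (n + N) * τ (n + 2))) /
        (τ (n + N + 1) * τ (n + 1))) :
    (∀ n : ℤ, γ (n + 2) = γ n) ∧
      (∀ n : ℤ, τ (n + N + 2) * τ n =
        γ n * (τ (n + N + 1) * τ (n + 1)) + α * (τ (n + N) * τ (n + 2))) := by
  obtain rfl : u = tauSubst τ := funext hu
  obtain rfl : γ = bilinearCoeff α N τ := funext hγ
  refine ⟨fun n => ?_, fun n => ?_⟩
  · have hwindow := eq_of_mul_prod_range_tauSubst_eq hτ n (by omega) (hDTKQ n)
    have hwindow' := eq_of_mul_prod_range_tauSubst_eq hτ (n + 1) (by omega) (hDTKQ (n + 1))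
    have hshift := sum_range_shift_sub (tauSubst τ) n (N + 1)
    push_cast [← add_assoc] at hshift
    have hconserved := tauSubst_sub_eq_mul_bilinearCoeff hτ α N n
    have hconserved' := tauSubst_add_sub_eq_mul_bilinearCoeff_add_two hτ α N n
    have hc : τ (n + 3) * τ (n + N + 1) / (τ (n + 2) * τ (n + N + 2)) ≠ 0 := by simp [hτ]
    apply mul_left_cancel₀ hc
    linear_combination hconserved - hconserved' + hwindow' - hwindow - hshift
  · rw [bilinearCoeff, div_mul_cancel₀ _ (mul_ne_zero (hτ _) (hτ _))]
    ring
end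

section
/- Let K be a field, N ≥ 2 an EVEN integer, and α, β ∈ K. Suppose τ : ℤ → K satisfies τ_n ≠ 0 for all n, and u_n := τ_{n+3}τ_n/(τ_{n+2}τ_{n+1}) satisfies the generalized DTKQ equation of order N with parameters α, β for all n ∈ ℤ. Then the quantity K_n := (τ_n·τ_{n+2N+1} + α·τ_{n+1}·τ_{n+2N})/(τ_{n+N}·τ_{n+N+1}) is independent of n; equivalently, τ satisfies the bilinear equation τ_{n+2N+1}τ_n = −α·τ_{n+2N}τ_{n+1} + K·τ_{n+N+1}τ_{n+N} for all n, with the constant K := K_0. -/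
/-!
Telescoping the product turns the DTKQ equation at `n` into
`S_n + β = α τ_{n+3} τ_{n+N} / (τ_{n+N+2} τ_{n+1})`, where `S_n = ∑_{j ≤ N} u_{n+j}`.
Since `S_{n+1} - S_n = u_{n+N+1} - u_n`, subtracting the equations at `n` and `n + 1` shows that
the first bilinear coefficient `J_n = (τ_n τ_{n+N+2} - α τ_{n+2} τ_{n+N}) / (τ_{n+1} τ_{n+N+1})`
is 2-periodic, hence `N`-periodic for even `N`. Eliminating `J_n` between the first bilinear
relations at `n` and `n + N` gives `K_{n+1} = K_n`.
-/

open Finset Function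

theorem sum_range_shift_one {M : Type*} [AddCommGroup M] (f : ℤ → M) (n : ℤ) (m : ℕ) :
    ∑ j ∈ range m, f (n + 1 + j) = ∑ j ∈ range m, f (n + j) + f (n + m) - f n := by
  have h := sum_range_succ' (fun j : ℕ => f (n + j)) m
  rw [sum_range_succ] at h
  push_cast at h
  simp only [add_assoc, add_comm (1 : ℤ), add_zero] at h ⊢
  rw [eq_sub_iff_add_eq, ← h]

section

variable {K : Type*} [Field K]

def tauRatio (τ : ℤ → K) (n : ℤ) : K := τ (n + 3) * τ n / (τ (n + 2) * τ (n + 1))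

def firstBilinearCoeff (α : K) (τ : ℤ → K) (N m : ℤ) : K :=
  (τ m * τ (m + N + 2) - α * (τ (m + 2) * τ (m + N))) / (τ (m + 1) * τ (m + N + 1))

def secondBilinearCoeff (α : K) (τ : ℤ → K) (N n : ℤ) : K :=
  (τ n * τ (n + 2 * N + 1) + α * (τ (n + 1) * τ (n + 2 * N))) / (τ (n + N) * τ (n + N + 1))

variable {τ : ℤ → K}

theorem firstBilinearCoeff_mul (α : K) (hτ : ∀ n, τ n ≠ 0) (N m : ℤ) :
    firstBilinearCoeff α τ N m * (τ (m + 1) * τ (m + N + 1)) =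
      τ m * τ (m + N + 2) - α * (τ (m + 2) * τ (m + N)) :=
  div_mul_cancel₀ _ (mul_ne_zero (hτ _) (hτ _))

theorem secondBilinearCoeff_mul (α : K) (hτ : ∀ n, τ n ≠ 0) (N n : ℤ) :
    secondBilinearCoeff α τ N n * (τ (n + N) * τ (n + N + 1)) =
      τ n * τ (n + 2 * N + 1) + α * (τ (n + 1) * τ (n + 2 * N)) :=
  div_mul_cancel₀ _ (mul_ne_zero (hτ _) (hτ _))

theorem prod_range_tauRatio (hτ : ∀ n, τ n ≠ 0) (n : ℤ) (m : ℕ) :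
    ∏ k ∈ range m, tauRatio τ (n + k + 1) =
      τ (n + m + 3) * τ (n + 1) / (τ (n + 3) * τ (n + m + 1)) := by
  induction m with
  | zero => simp [div_self, hτ]
  | succ m ih =>
    rw [prod_range_succ, ih, tauRatio]
    have h₁ := hτ (n + m + 3)
    have h₂ := hτ (n + m + 1)
    push_cast
    ring_nf at h₁ h₂ ⊢
    field_simp

theorem dtkq_sum_add_eq {α β : K} (hτ : ∀ n, τ n ≠ 0) {N : ℕ} (hN : 1 ≤ N) {n : ℤ}
    (hDTKQ : ((∑ j ∈ range (N + 1), tauRatio τ (n + j)) + β) *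
        (∏ k ∈ range (N - 1), tauRatio τ (n + k + 1)) = α) :
    ∑ j ∈ range (N + 1), tauRatio τ (n + j) + β =
      α * (τ (n + 3) * τ (n + N)) / (τ (n + N + 2) * τ (n + 1)) := by
  rw [prod_range_tauRatio hτ, Nat.cast_sub hN, Nat.cast_one] at hDTKQ
  rw [eq_div_iff (mul_ne_zero (hτ _) (hτ _)), ← hDTKQ]
  rw [show n + (N - 1 : ℤ) + 3 = n + N + 2 by ring, show n + (N - 1 : ℤ) + 1 = n + N by ring]
  have := hτ (n + 3)
  have := hτ (n + N)
  field_simp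

theorem firstBilinearCoeff_add_two {α : K} (hτ : ∀ n, τ n ≠ 0) {N n : ℤ}
    (h : α * (τ (n + 4) * τ (n + N + 1)) / (τ (n + N + 3) * τ (n + 2)) -
      α * (τ (n + 3) * τ (n + N)) / (τ (n + N + 2) * τ (n + 1)) =
      tauRatio τ (n + N + 1) - tauRatio τ n) :
    firstBilinearCoeff α τ N (n + 2) = firstBilinearCoeff α τ N n := by
  simp only [firstBilinearCoeff, tauRatio] at h ⊢
  have := hτ n; have := hτ (n + 1); have := hτ (n + 2); have := hτ (n + 3); have := hτ (n + 4)
  have := hτ (n + N); have := hτ (n + N + 1); have := hτ (n + N + 2); have := hτ (n + N + 3)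
  have := hτ (n + N + 4)
  ring_nf at *
  field_simp at h ⊢
  linear_combination -h

theorem firstBilinearCoeff_periodic_two {α β : K} (hτ : ∀ n, τ n ≠ 0) {N : ℕ} (hN : 1 ≤ N)
    (hDTKQ : ∀ n : ℤ, ((∑ j ∈ range (N + 1), tauRatio τ (n + j)) + β) *
        (∏ k ∈ range (N - 1), tauRatio τ (n + k + 1)) = α) :
    Periodic (firstBilinearCoeff α τ N) 2 := by
  intro n
  have h₀ := dtkq_sum_add_eq hτ hN (hDTKQ n)
  have h₁ := dtkq_sum_add_eq hτ hN (hDTKQ (n + 1))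
  rw [sum_range_shift_one] at h₁
  push_cast at h₁
  refine firstBilinearCoeff_add_two hτ ?_
  linear_combination (norm := ring_nf) h₀ - h₁

theorem secondBilinearCoeff_periodic_one {α : K} (hτ : ∀ n, τ n ≠ 0) {N : ℤ}
    (hJ : Periodic (firstBilinearCoeff α τ N) N) :
    Periodic (secondBilinearCoeff α τ N) 1 := by
  intro m
  have hm := firstBilinearCoeff_mul α hτ N m
  have hmN := firstBilinearCoeff_mul α hτ N (m + N)
  rw [hJ m] at hmN
  rw [secondBilinearCoeff, secondBilinearCoeff,
    div_eq_div_iff (mul_ne_zero (hτ _) (hτ _)) (mul_ne_zero (hτ _) (hτ _))]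
  linear_combination (norm := ring_nf)
    τ (m + N + 1) * (τ (m + 2 * N + 1) * hm - τ (m + 1) * hmN)

end

/-- for even `N`, the tau function of a solution of the generalized DTKQ
equation satisfies the second bilinear equation
`τ_{n+2N+1} τ_n = -α τ_{n+2N} τ_{n+1} + K τ_{n+N+1} τ_{n+N}` with constant `K`. -/
theorem dtkq_even_second_bilinear {K : Type*} [Field K] (N : ℕ) (hN : 2 ≤ N)
    (hNeven : Even N) (α β : K)
    (τ : ℤ → K) (hτ : ∀ n, τ n ≠ 0)
    (u : ℤ → K) (hu : ∀ n : ℤ, u n = τ (n + 3) * τ n / (τ (n + 2) * τ (n + 1)))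
    (hDTKQ : ∀ n : ℤ,
      ((∑ j ∈ Finset.range (N + 1), u (n + j)) + β) *
        (∏ k ∈ Finset.range (N - 1), u (n + k + 1)) = α)
    (Kf : ℤ → K)
    (hKf : ∀ n : ℤ, Kf n =
      (τ n * τ (n + 2 * N + 1) + α * (τ (n + 1) * τ (n + 2 * N))) /
        (τ (n + N) * τ (n + N + 1))) :
    (∀ n : ℤ, Kf n = Kf 0) ∧
      (∀ n : ℤ, τ (n + 2 * N + 1) * τ n =
        -α * (τ (n + 2 * N) * τ (n + 1)) + Kf 0 * (τ (n + N + 1) * τ (n + N))) := by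
  obtain rfl : u = tauRatio τ := funext hu
  obtain rfl : Kf = secondBilinearCoeff α τ N := funext hKf
  obtain ⟨M, hM⟩ := hNeven
  have hJ : Periodic (firstBilinearCoeff α τ N) N := by
    have h := (firstBilinearCoeff_periodic_two hτ (by omega) hDTKQ).nat_mul M
    rwa [show (N : ℤ) = M * 2 by omega] at h ⊢
  have hconst (n : ℤ) : secondBilinearCoeff α τ N n = secondBilinearCoeff α τ N 0 := by
    simpa using (secondBilinearCoeff_periodic_one hτ hJ).int_mul_eq n
  refine ⟨hconst, fun n => ?_⟩
  rw [← hconst n]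
  linear_combination -secondBilinearCoeff_mul α hτ N n
end

section
/- Let K be a field, N ≥ 2 an integer, and α, β ∈ K. Suppose τ : ℤ → K satisfies τ_n ≠ 0 for all n and satisfies the multilinear equation τ_{n+N+3}·τ_{n+N}²·∏_{j=1}^{N−1} τ_{n+j} = α·τ_{n+3}·τ_{n+N}·∏_{j=2}^{N+1} τ_{n+j} − β·∏_{j=1}^{N+2} τ_{n+j} − τ_n·τ_{n+3}·∏_{j=3}^{N+2} τ_{n+j} − ∑_{k=1}^{N−1} τ_{n+k}·τ_{n+k+3}·∏_{j=1, j≠k+1, j≠k+2}^{N+2} τ_{n+j} for all n ∈ ℤ. Then u_n := τ_{n+3}τ_n/(τ_{n+2}τ_{n+1}) satisfies the generalized DTKQ equation of order N with parameters α, β for all n ∈ ℤ. -/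
/-!
Write `P = τ_{n+1} ⋯ τ_{n+N+2}`. Since `u_m τ_{m+1} τ_{m+2} = τ_m τ_{m+3}`, each negative term of
the multilinear equation, and its left-hand side, is `u_{n+k} P` for some `0 ≤ k ≤ N`, while the
`β`-term is `β P`. The product `∏_{k=1}^{N-1} u_{n+k}` telescopes to
`τ_{n+1} τ_{n+N+2} / (τ_{n+3} τ_{n+N})`, so the `α`-term is `α P / ∏_{k=1}^{N-1} u_{n+k}`.
Dividing the equation by `P` gives the DTKQ equation. Translating by `n`, it suffices to treat
`n = 0` for sequences indexed by `ℕ`, where no integer casts occur.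
-/

open Finset

theorem Finset.mul_mul_prod_erase_erase {ι M : Type*} [CommMonoid M] [DecidableEq ι]
    (s : Finset ι) (f : ι → M) {a b : ι} (ha : a ∈ s) (hb : b ∈ s) (hab : a ≠ b) :
    f a * f b * ∏ x ∈ (s.erase a).erase b, f x = ∏ x ∈ s, f x := by
  rw [mul_assoc, mul_prod_erase _ _ (mem_erase.2 ⟨hab.symm, hb⟩), mul_prod_erase _ _ ha]

theorem Finset.prod_range_add_eq_prod_Ico {M : Type*} [CommMonoid M] (f : ℕ → M) (m c : ℕ) :
    ∏ j ∈ range m, f (j + c) = ∏ j ∈ Ico c (m + c), f j := by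
  rw [range_eq_Ico, prod_Ico_add', zero_add]

namespace DTKQ

variable {K : Type*} [Field K] {τ u : ℕ → K}

theorem u_mul_tau_mul_tau (hτ : ∀ j, τ j ≠ 0)
    (hu : ∀ j, u j = τ (j + 3) * τ j / (τ (j + 2) * τ (j + 1))) (m : ℕ) :
    u m * (τ (m + 1) * τ (m + 2)) = τ m * τ (m + 3) := by
  rw [hu]
  field_simp [hτ]

theorem u_mul_prod_tau (hτ : ∀ j, τ j ≠ 0)
    (hu : ∀ j, u j = τ (j + 3) * τ j / (τ (j + 2) * τ (j + 1)))
    {s : Finset ℕ} {m : ℕ} (h₁ : m + 1 ∈ s) (h₂ : m + 2 ∈ s) :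
    u m * ∏ j ∈ s, τ j = τ m * τ (m + 3) * ∏ j ∈ (s.erase (m + 1)).erase (m + 2), τ j := by
  rw [← s.mul_mul_prod_erase_erase τ h₁ h₂ (by omega), ← mul_assoc, u_mul_tau_mul_tau hτ hu]

theorem prod_u_mul_tau_mul_tau (hτ : ∀ j, τ j ≠ 0)
    (hu : ∀ j, u j = τ (j + 3) * τ j / (τ (j + 2) * τ (j + 1))) (a L : ℕ) :
    (∏ k ∈ range L, u (k + a)) * τ (L + a) * τ (a + 2) = τ a * τ (L + a + 2) := by
  induction L with
  | zero => simp only [prod_range_zero, zero_add]; ring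
  | succ L ih =>
    apply mul_right_cancel₀ (hτ (L + a + 2))
    rw [prod_range_succ, show L + 1 + a = L + a + 1 by omega,
      show L + a + 1 + 2 = L + a + 3 by omega]
    linear_combination
      (∏ k ∈ range L, u (k + a)) * τ (a + 2) * u_mul_tau_mul_tau hτ hu (L + a) +
        τ (L + a + 3) * ih

theorem prod_u_mul_eq_prod_Icc (hτ : ∀ j, τ j ≠ 0)
    (hu : ∀ j, u j = τ (j + 3) * τ j / (τ (j + 2) * τ (j + 1))) (L : ℕ) :
    (∏ k ∈ range L, u (k + 1)) * (τ 3 * τ (L + 1) * ∏ j ∈ range (L + 1), τ (j + 2)) =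
      ∏ j ∈ Icc 1 (L + 1 + 2), τ j := by
  have htel := prod_u_mul_tau_mul_tau hτ hu 1 L
  have hrest : ((Icc 1 (L + 1 + 2)).erase 1).erase (L + 1 + 2) = Ico 2 (L + 1 + 2) := by
    ext; simp only [mem_Icc, mem_Ico, mem_erase]; omega
  rw [← mul_mul_prod_erase_erase _ τ (a := 1) (b := L + 1 + 2) (by simp) (by simp) (by omega),
    hrest, ← prod_range_add_eq_prod_Ico]
  linear_combination (∏ j ∈ range (L + 1), τ (j + 2)) * htel

theorem sum_u_mul_prod_Icc (hτ : ∀ j, τ j ≠ 0)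
    (hu : ∀ j, u j = τ (j + 3) * τ j / (τ (j + 2) * τ (j + 1))) (L : ℕ) :
    (∑ j ∈ range (L + 1 + 1), u j) * ∏ j ∈ Icc 1 (L + 1 + 2), τ j =
      τ 0 * τ 3 * ∏ j ∈ range (L + 1), τ (j + 3)
      + ∑ k ∈ range L, τ (k + 1) * τ (k + 4) *
          ∏ j ∈ ((Icc 1 (L + 1 + 2)).erase (k + 2)).erase (k + 3), τ j
      + τ (L + 1 + 3) * τ (L + 1) ^ 2 * ∏ j ∈ range L, τ (j + 1) := by
  have hfirst : ((Icc 1 (L + 1 + 2)).erase (0 + 1)).erase (0 + 2) = Ico 3 (L + 1 + 3) := by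
    ext; simp only [mem_Icc, mem_Ico, mem_erase]; omega
  have hlast : ((Icc 1 (L + 1 + 2)).erase (L + 1 + 1)).erase (L + 1 + 2) =
      Ico 1 (L + 1 + 1) := by
    ext; simp only [mem_Icc, mem_Ico, mem_erase]; omega
  have hmiddle : ∀ k ∈ range L, u (k + 1) * ∏ j ∈ Icc 1 (L + 1 + 2), τ j =
      τ (k + 1) * τ (k + 4) * ∏ j ∈ ((Icc 1 (L + 1 + 2)).erase (k + 2)).erase (k + 3), τ j := by
    intro k hk
    have hk : k < L := mem_range.1 hk
    exact u_mul_prod_tau hτ hu (by simp; omega) (by simp; omega)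
  rw [sum_range_succ, sum_range_succ', add_comm _ (u 0), add_mul, add_mul, sum_mul,
    sum_congr rfl hmiddle, u_mul_prod_tau hτ hu (by simp) (by simp), hfirst,
    ← prod_range_add_eq_prod_Ico, u_mul_prod_tau hτ hu (by simp) (by simp), hlast,
    ← prod_range_add_eq_prod_Ico, prod_range_succ (fun j => τ (j + 1)) L]
  ring

theorem dtkq_of_multilinear_nat (N : ℕ) (hN : 1 ≤ N) (α β : K)
    (hτ : ∀ j, τ j ≠ 0) (hu : ∀ j, u j = τ (j + 3) * τ j / (τ (j + 2) * τ (j + 1)))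
    (hmulti : τ (N + 3) * τ N ^ 2 * ∏ j ∈ range (N - 1), τ (j + 1) =
      α * τ 3 * τ N * ∏ j ∈ range N, τ (j + 2)
      - β * ∏ j ∈ range (N + 2), τ (j + 1)
      - τ 0 * τ 3 * ∏ j ∈ range N, τ (j + 3)
      - ∑ k ∈ range (N - 1), τ (k + 1) * τ (k + 4) *
          ∏ j ∈ ((Icc 1 (N + 2)).erase (k + 2)).erase (k + 3), τ j) :
    ((∑ j ∈ range (N + 1), u j) + β) * ∏ k ∈ range (N - 1), u (k + 1) = α := by
  obtain ⟨L, rfl⟩ : ∃ L, N = L + 1 := ⟨N - 1, by omega⟩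
  simp only [Nat.add_sub_cancel] at hmulti ⊢
  have hP : ∏ j ∈ Icc 1 (L + 1 + 2), τ j ≠ 0 := prod_ne_zero_iff.2 fun j _ => hτ j
  have hwindow : ∏ j ∈ range (L + 1 + 2), τ (j + 1) = ∏ j ∈ Icc 1 (L + 1 + 2), τ j := by
    rw [prod_range_add_eq_prod_Ico, Ico_add_one_right_eq_Icc]
  apply mul_right_cancel₀ hP
  linear_combination (∏ k ∈ range L, u (k + 1)) *
      (sum_u_mul_prod_Icc hτ hu L + hmulti - β * hwindow) + α * prod_u_mul_eq_prod_Icc hτ hu L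

end DTKQ

/-- if the tau function satisfies the multilinear (Laurentified) equation,
then `u_n = τ_{n+3}τ_n/(τ_{n+2}τ_{n+1})` satisfies the generalized DTKQ equation. -/
theorem multilinear_gives_dtkq {K : Type*} [Field K] (N : ℕ) (hN : 2 ≤ N) (α β : K)
    (τ : ℤ → K) (hτ : ∀ n, τ n ≠ 0)
    (hmulti : ∀ n : ℤ,
      τ (n + N + 3) * (τ (n + N)) ^ 2 * ∏ j ∈ Finset.range (N - 1), τ (n + j + 1) =
        α * τ (n + 3) * τ (n + N) * ∏ j ∈ Finset.range N, τ (n + j + 2)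
        - β * ∏ j ∈ Finset.range (N + 2), τ (n + j + 1)
        - τ n * τ (n + 3) * ∏ j ∈ Finset.range N, τ (n + j + 3)
        - ∑ k ∈ Finset.range (N - 1), τ (n + k + 1) * τ (n + k + 4) *
            ∏ j ∈ ((Finset.Icc 1 (N + 2)).erase (k + 2)).erase (k + 3), τ (n + j))
    (u : ℤ → K) (hu : ∀ n : ℤ, u n = τ (n + 3) * τ n / (τ (n + 2) * τ (n + 1))) :
    ∀ n : ℤ,
      ((∑ j ∈ Finset.range (N + 1), u (n + j)) + β) *
        (∏ k ∈ Finset.range (N - 1), u (n + k + 1)) = α := by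
  intro n
  have key := DTKQ.dtkq_of_multilinear_nat N (by omega) α β
    (τ := fun j : ℕ => τ (n + j)) (u := fun j : ℕ => u (n + j)) (fun j => hτ _)
    (fun j => by simp only [hu, Nat.cast_add, Nat.cast_ofNat, Nat.cast_one, add_assoc])
    (by simpa only [Nat.cast_add, Nat.cast_ofNat, Nat.cast_one, Nat.cast_zero, add_zero,
      add_assoc] using hmulti n)
  simpa only [Nat.cast_add, Nat.cast_one, add_assoc] using key
end

section
/- Let N ≥ 2 be an integer and suppose d : ℕ → ℝ satisfies, for all n ≥ 0, the tropical multilinear equation d_{n+N+3} + 2·d_{n+N} + ∑_{j=1}^{N−1} d_{n+j} = max M_n, where M_n is the finite set consisting of the N+2 numbers: (i) d_{n+3} + d_{n+N} + ∑_{j=2}^{N+1} d_{n+j}; (ii) ∑_{j=1}^{N+2} d_{n+j}; (iii) d_n + d_{n+3} + ∑_{j=3}^{N+2} d_{n+j}; and (iv) for each k = 1, …, N−1, the number d_{n+k} + d_{n+k+3} + ∑_{j=1, j≠k+1, j≠k+2}^{N+2} d_{n+j}. Then the sequence U_n := d_{n+3} − d_{n+2} − d_{n+1} + d_n satisfies,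 for all n ≥ 0, the tropical equation U_{n+N} = max(0, −S_n, U_n, U_{n+1}, …, U_{n+N−1}), where S_n := ∑_{j=1}^{N−1} U_{n+j}. -/
/-!
Write `W_n = d_{n+1} + ⋯ + d_{n+N+2}`. The left side of the multilinear equation is
`W_n + U_{n+N}`, and the `N + 2` terms of its right side are `W_n - S_n`, `W_n`, `W_n + U_n`
and `W_n + U_{n+k}` (`S_n` telescopes to `d_{n+N+2} - d_{n+N} - d_{n+3} + d_{n+1}`).
Since addition distributes over `max`, cancelling `W_n` gives the tropical DTKQ equation.
-/

open Finset

lemma Finset.sup'_range_eq_max_sup'_range_sub_one {α : Type*} [LinearOrder α] {N : ℕ}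
    (f : ℕ → α) (hN : (range N).Nonempty) (hN' : (range (N - 1)).Nonempty) :
    (range N).sup' hN f = max (f 0) ((range (N - 1)).sup' hN' fun k => f (k + 1)) := by
  obtain ⟨M, rfl⟩ := Nat.exists_eq_add_one_of_ne_zero (nonempty_range_iff.mp hN)
  rw [sup'_congr hN (range_add_one' M) fun _ _ => rfl, sup'_insert (H := by simpa using hN'),
    sup'_map]
  rfl

section

def tropicalSubst (d : ℕ → ℝ) (n : ℕ) : ℝ := d (n + 3) - d (n + 2) - d (n + 1) + d n

variable (d : ℕ → ℝ) (n : ℕ)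

lemma sum_range_tropicalSubst (M : ℕ) :
    ∑ j ∈ range M, tropicalSubst d (n + j + 1) =
      d (n + M + 3) - d (n + M + 1) - d (n + 3) + d (n + 1) := by
  have h (j : ℕ) : tropicalSubst d (n + j + 1) =
      (d (n + (j + 1) + 3) - d (n + (j + 1) + 1)) - (d (n + j + 3) - d (n + j + 1)) := by
    rw [tropicalSubst]; ring_nf
  simp_rw [h]
  rw [sum_range_sub fun j => d (n + j + 3) - d (n + j + 1)]
  ring_nf

variable {N : ℕ}

lemma multilinear_lhs_eq (hN : 1 ≤ N) :
    d (n + N + 3) + 2 * d (n + N) + ∑ j ∈ range (N - 1), d (n + j + 1) =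
      ∑ j ∈ range (N + 2), d (n + j + 1) + tropicalSubst d (n + N) := by
  obtain ⟨M, rfl⟩ := Nat.exists_eq_add_of_le' hN
  rw [Nat.add_sub_cancel, show M + 1 + 2 = M + 3 by rfl]
  simp only [sum_range_succ, tropicalSubst]
  ring_nf

lemma multilinear_term₁_eq (hN : 1 ≤ N) :
    d (n + 3) + d (n + N) + ∑ j ∈ range N, d (n + j + 2) =
      ∑ j ∈ range (N + 2), d (n + j + 1) +
        -∑ j ∈ range (N - 1), tropicalSubst d (n + j + 1) := by
  obtain ⟨M, rfl⟩ := Nat.exists_eq_add_of_le' hN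
  rw [sum_range_tropicalSubst, Nat.add_sub_cancel, show M + 1 + 2 = M + 1 + 1 + 1 from rfl,
    sum_range_succ (fun j => d (n + j + 1)), sum_range_succ' (fun j => d (n + j + 1))]
  ring_nf

lemma multilinear_term₃_eq :
    d n + d (n + 3) + ∑ j ∈ range N, d (n + j + 3) =
      ∑ j ∈ range (N + 2), d (n + j + 1) + tropicalSubst d n := by
  simp only [sum_range_succ', tropicalSubst]
  ring_nf

lemma multilinear_term₄_eq {k : ℕ} (hk : k < N - 1) :
    d (n + k + 1) + d (n + k + 4) +
        ∑ j ∈ ((Icc 1 (N + 2)).erase (k + 2)).erase (k + 3), d (n + j) =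
      ∑ j ∈ range (N + 2), d (n + j + 1) + tropicalSubst d (n + (k + 1)) := by
  rw [sum_erase_eq_sub (by simp only [mem_erase, mem_Icc]; omega),
    sum_erase_eq_sub (by simp only [mem_Icc]; omega),
    ← Ico_add_one_right_eq_Icc, sum_Ico_eq_sum_range, tropicalSubst]
  simp only [Nat.add_sub_cancel]
  ring_nf

end

/-- the tropical substitution `U_n = d_{n+3} - d_{n+2} - d_{n+1} + d_n`
sends solutions of the tropical multilinear equation to solutions of the tropical
DTKQ equation `U_{n+N} = [max(-S_n, U_n, …, U_{n+N-1})]₊`. -/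
theorem tropical_multilinear_to_tropical_dtkq (N : ℕ) (hN : 2 ≤ N) (d : ℕ → ℝ)
    (hd : ∀ n : ℕ,
      d (n + N + 3) + 2 * d (n + N) + ∑ j ∈ Finset.range (N - 1), d (n + j + 1) =
        max (d (n + 3) + d (n + N) + ∑ j ∈ Finset.range N, d (n + j + 2))
          (max (∑ j ∈ Finset.range (N + 2), d (n + j + 1))
            (max (d n + d (n + 3) + ∑ j ∈ Finset.range N, d (n + j + 3))
              ((Finset.range (N - 1)).sup'
                (Finset.nonempty_range_iff.mpr (by omega))
                (fun k => d (n + k + 1) + d (n + k + 4) +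
                  ∑ j ∈ ((Finset.Icc 1 (N + 2)).erase (k + 2)).erase (k + 3), d (n + j))))))
    (U : ℕ → ℝ) (hU : ∀ n : ℕ, U n = d (n + 3) - d (n + 2) - d (n + 1) + d n)
    (S : ℕ → ℝ) (hS : ∀ n : ℕ, S n = ∑ j ∈ Finset.range (N - 1), U (n + j + 1)) :
    ∀ n : ℕ, U (n + N) =
      max (max 0 (-S n))
        ((Finset.range N).sup' (Finset.nonempty_range_iff.mpr (by omega))
          (fun j => U (n + j))) := by
  obtain rfl : U = tropicalSubst d := funext hU
  intro n
  have key := hd n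
  rw [multilinear_lhs_eq d n (by omega), multilinear_term₁_eq d n (by omega),
    multilinear_term₃_eq,
    sup'_congr _ rfl fun k hk => multilinear_term₄_eq d n (mem_range.mp hk), ← add_sup'] at key
  rw [hS, sup'_range_eq_max_sup'_range_sub_one _ _ (nonempty_range_iff.mpr (by omega))]
  apply add_left_cancel (a := ∑ j ∈ range (N + 2), d (n + j + 1))
  rw [key]
  simp only [← max_add_add_left, add_zero, max_assoc]
  exact max_left_comm _ _ _
end

section
/- Let K be a field, N ≥ 2 an integer, and α, β ∈ K. For a sequence w : ℤ → K with w_n ≠ 0 for all n, define γ_n[w] := ∏_{j=0}^{N} w_{n+j} − α/∏_{j=1}^{N−1} w_{n+j}, define 𝓔_n[w] := ∑_{j=0}^{N} w_{n+j}w_{n+j+1} + β − α/∏_{j=1}^{N−1} (w_{n+j}w_{n+j+1}), and define E_n[w] := w_{n+N+2}w_{n+N+1} − w_{n+1}w_n + (α/∏_{j=2}^{N} w_{n+j})·(1/∏_{k=1}^{N−1} w_{n+k} − 1/∏_{k=3}^{N+1} w_{n+k}). Then for every n ∈ ℤ the identities γ_{n+2}[w] − γ_n[w] = (∏_{j=2}^{N}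 w_{n+j})·(𝓔_{n+1}[w] − 𝓔_n[w]) = E_n[w]·∏_{j=2}^{N} w_{n+j} hold. In particular, if w satisfies the modified generalized DTKQ equation 𝓔_n[w] = 0 for all n, then γ_n[w] is a 2-integral: γ_{n+2}[w] = γ_n[w] for all n. -/
/-!
Write `A`, `B`, `C` for the products of the `N - 1` interior factors `w_{n+1} ⋯ w_{n+N-1}` and
its shifts by one and two. Then `γ_n = w_n A w_{n+N} - α / A` and
`𝓔_n = S_n + β - α / (A B)`, where the sum `S_n` telescopes:
`S_{n+1} - S_n = w_{n+N+1} w_{n+N+2} - w_n w_{n+1}`. Multiplying by `B` and using the sliding-window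
identities `w_{n+1} B = A w_{n+N}` and `B w_{n+N+1} = w_{n+2} C` turns `B (𝓔_{n+1} - 𝓔_n)` into
`γ_{n+2} - γ_n`.
-/

open Finset

section ConsecutiveProducts

variable {M : Type*} [CommMonoid M] (w : ℤ → M) (n : ℤ) (k : ℕ)

theorem mul_prod_range_add_one_eq_prod_range_mul :
    w n * ∏ j ∈ range k, w (n + j + 1) = (∏ j ∈ range k, w (n + j)) * w (n + k) := by
  have hleft := prod_range_succ' (fun j : ℕ => w (n + j)) k
  have hright := prod_range_succ (fun j : ℕ => w (n + j)) k
  push_cast at hleft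
  rw [mul_comm, ← hright, hleft, add_zero]
  simp only [add_assoc]

theorem prod_range_add_two_eq_mul_prod_mul :
    ∏ j ∈ range (k + 2), w (n + j) = w n * (∏ j ∈ range k, w (n + j + 1)) * w (n + k + 1) := by
  rw [prod_range_succ, prod_range_succ, mul_prod_range_add_one_eq_prod_range_mul]
  push_cast
  rw [add_assoc]

end ConsecutiveProducts

theorem sum_range_add_one_sub_sum {G : Type*} [AddCommGroup G] (f : ℤ → G) (n : ℤ) (k : ℕ) :
    ∑ j ∈ range k, f (n + 1 + j) - ∑ j ∈ range k, f (n + j) = f (n + k) - f n := by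
  have htelescope := sum_range_sub (fun j : ℕ => f (n + j)) k
  push_cast at htelescope
  rw [add_zero] at htelescope
  rw [← sum_sub_distrib, ← htelescope]
  exact sum_congr rfl fun j _ => by rw [add_right_comm, add_assoc]

namespace ModifiedDTKQ

variable {K : Type*} [Field K] (N : ℕ) (α β : K) (w : ℤ → K)

/-! `lhs` is the left-hand side `𝓔_n[w]` of the modified DTKQ equation and `lhsDiff` is `E_n[w]`,
its forward difference written out. -/

def gamma (n : ℤ) : K :=
  (∏ j ∈ range (N + 1), w (n + j)) - α / ∏ j ∈ range (N - 1), w (n + j + 1)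

def lhs (n : ℤ) : K :=
  (∑ j ∈ range (N + 1), w (n + j) * w (n + j + 1)) + β -
    α / ∏ j ∈ range (N - 1), (w (n + j + 1) * w (n + j + 2))

def lhsDiff (n : ℤ) : K :=
  w (n + N + 2) * w (n + N + 1) - w (n + 1) * w n +
    (α / ∏ j ∈ range (N - 1), w (n + j + 2)) *
      (1 / ∏ k ∈ range (N - 1), w (n + k + 1) - 1 / ∏ k ∈ range (N - 1), w (n + k + 3))

theorem lhs_add_one_sub (n : ℤ) : lhs N α β w (n + 1) - lhs N α β w n = lhsDiff N α w n := by
  have hsum := sum_range_add_one_sub_sum (fun m => w m * w (m + 1)) n (N + 1)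
  have hshift₁ : ∏ j ∈ range (N - 1), w (n + 1 + j + 1) = ∏ j ∈ range (N - 1), w (n + j + 2) :=
    prod_congr rfl fun j _ => congrArg w (by ring)
  have hshift₂ : ∏ j ∈ range (N - 1), w (n + 1 + j + 2) = ∏ j ∈ range (N - 1), w (n + j + 3) :=
    prod_congr rfl fun j _ => congrArg w (by ring)
  simp only [lhs, lhsDiff, prod_mul_distrib, hshift₁, hshift₂]
  push_cast at hsum
  rw [show n + (N + 1) + 1 = n + N + 2 by ring, ← add_assoc] at hsum
  linear_combination hsum

theorem gamma_add_two_sub (hN : 1 ≤ N) (hw : ∀ n, w n ≠ 0) (n : ℤ) :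
    gamma N α w (n + 2) - gamma N α w n =
      (∏ j ∈ range (N - 1), w (n + j + 2)) * lhsDiff N α w n := by
  obtain ⟨M, rfl⟩ : ∃ M, N = M + 1 := ⟨N - 1, by omega⟩
  have hwindow₀ := prod_range_add_two_eq_mul_prod_mul w n M
  have hwindow₂ : ∏ j ∈ range (M + 2), w (n + 2 + j) =
      w (n + 2) * (∏ j ∈ range M, w (n + j + 3)) * w (n + M + 3) := by
    have := prod_range_add_two_eq_mul_prod_mul w (n + 2) M
    ring_nf at this ⊢
    exact this
  have hslide₁ : w (n + 1) * ∏ j ∈ range M, w (n + j + 2) =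
      (∏ j ∈ range M, w (n + j + 1)) * w (n + M + 1) := by
    have := mul_prod_range_add_one_eq_prod_range_mul w (n + 1) M
    ring_nf at this ⊢
    exact this
  have hslide₂ : w (n + 2) * ∏ j ∈ range M, w (n + j + 3) =
      (∏ j ∈ range M, w (n + j + 2)) * w (n + M + 2) := by
    have := mul_prod_range_add_one_eq_prod_range_mul w (n + 2) M
    ring_nf at this ⊢
    exact this
  have hB : ∏ j ∈ range M, w (n + j + 2) ≠ 0 := prod_ne_zero_iff.2 fun j _ => hw _
  have hshift : ∏ j ∈ range M, w (n + 2 + j + 1) = ∏ j ∈ range M, w (n + j + 3) :=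
    prod_congr rfl fun j _ => congrArg w (by ring)
  simp only [gamma, lhsDiff, add_tsub_cancel_right, show M + 1 + 1 = M + 2 from rfl,
    hwindow₀, hwindow₂, hshift]
  push_cast
  rw [show n + (M + 1) + 2 = n + M + 3 by ring, show n + (M + 1) + 1 = n + M + 2 by ring]
  set A := ∏ j ∈ range M, w (n + j + 1)
  set B := ∏ j ∈ range M, w (n + j + 2)
  set C := ∏ j ∈ range M, w (n + j + 3)
  linear_combination w (n + M + 3) * hslide₂ + w n * hslide₁ -
    α * (A⁻¹ - C⁻¹) * mul_inv_cancel₀ hB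

end ModifiedDTKQ

/-- the identities
`γ_{n+2}[w] - γ_n[w] = (∏_{j=2}^N w_{n+j})·(𝓔_{n+1}[w] - 𝓔_n[w]) = E_n[w]·∏_{j=2}^N w_{n+j}`,
so that `γ_n[w]` is a 2-integral of the modified generalized DTKQ equation `𝓔_n[w] = 0`. -/
theorem gamma_two_integral_identity {K : Type*} [Field K] (N : ℕ) (hN : 2 ≤ N) (α β : K)
    (w : ℤ → K) (hw : ∀ n, w n ≠ 0)
    (γ : ℤ → K)
    (hγ : ∀ n : ℤ, γ n =
      (∏ j ∈ Finset.range (N + 1), w (n + j)) -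
        α / ∏ j ∈ Finset.range (N - 1), w (n + j + 1))
    (E' : ℤ → K)
    (hE' : ∀ n : ℤ, E' n =
      (∑ j ∈ Finset.range (N + 1), w (n + j) * w (n + j + 1)) + β -
        α / ∏ j ∈ Finset.range (N - 1), (w (n + j + 1) * w (n + j + 2)))
    (E : ℤ → K)
    (hE : ∀ n : ℤ, E n =
      w (n + N + 2) * w (n + N + 1) - w (n + 1) * w n +
        (α / ∏ j ∈ Finset.range (N - 1), w (n + j + 2)) *
          (1 / ∏ k ∈ Finset.range (N - 1), w (n + k + 1) -
            1 / ∏ k ∈ Finset.range (N - 1), w (n + k + 3))) :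
    (∀ n : ℤ,
      γ (n + 2) - γ n =
        (∏ j ∈ Finset.range (N - 1), w (n + j + 2)) * (E' (n + 1) - E' n) ∧
      γ (n + 2) - γ n = E n * ∏ j ∈ Finset.range (N - 1), w (n + j + 2)) ∧
    ((∀ n : ℤ, E' n = 0) → ∀ n : ℤ, γ (n + 2) = γ n) := by
  obtain rfl : γ = ModifiedDTKQ.gamma N α w := funext hγ
  obtain rfl : E' = ModifiedDTKQ.lhs N α β w := funext hE'
  obtain rfl : E = ModifiedDTKQ.lhsDiff N α w := funext hE
  have hstep n := ModifiedDTKQ.gamma_add_two_sub N α w (by omega) hw n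
  refine ⟨fun n => ⟨?_, by rw [hstep, mul_comm]⟩, fun hsolution n => ?_⟩
  · rw [hstep, ModifiedDTKQ.lhs_add_one_sub]
  · rw [← sub_eq_zero, hstep, ← ModifiedDTKQ.lhs_add_one_sub N α β, hsolution, hsolution,
      sub_self, mul_zero]
end

section
/- Let K be a field, N ≥ 2 an EVEN integer, and α, β ∈ K. Suppose u : ℤ → K satisfies u_n ≠ 0 for all n and satisfies the generalized DTKQ equation of order N with parameters α, β for all n ∈ ℤ. Then the sequence v_n := ∏_{j=0}^{(N−2)/2} u_{n+2j} = u_n·u_{n+2}·⋯·u_{n+N−2} satisfies the ordinary difference equation v_{n+N+1} − v_n = α·(1/v_{n+N} − 1/v_{n+1}) for all n ∈ ℤ, which is the (N,1) periodic travelling-wave reduction of Hirota's lattice KdV equation. -/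
/-!
Write `N = 2h` and `v_a = u_a u_{a+2} ⋯ u_{a+N-2}`. Subtracting the DTKQ equations at `m` and
`m + 1`, each multiplied by the factor that completes the window `u_{m+1} ⋯ u_{m+N}`, gives the
local conservation law `(u_{m+N+1} - u_m) u_{m+1} ⋯ u_{m+N} = α (u_{m+1} - u_{m+N})`.

Now replace the factors of `v_n` one at a time by those of `v_{n+N+1}` (products `M_i`), and
simultaneously those of `v_{n+1}` by those of `v_{n+N}` (products `L_i`). Since `M_i L_i` is always
a window of `N` consecutive `u`'s, the conservation law at `m = n + 2i` says exactly
`M_{i+1} - M_i = α (1/L_{i+1} - 1/L_i)`, and summing over `i < h` telescopes to the claim.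
-/

section

open Finset

section CommMonoid

variable {M : Type*} [CommMonoid M] (u : ℤ → M)

def stepTwoProd (a : ℤ) (k : ℕ) : M := ∏ j ∈ range k, u (a + 2 * j)

def windowProd (a : ℤ) (k : ℕ) : M := ∏ j ∈ range k, u (a + j)

def stairProd (h : ℕ) (a b : ℤ) (i : ℕ) : M := stepTwoProd u b i * stepTwoProd u (a + 2 * i) (h - i)

theorem stepTwoProd_succ (a : ℤ) (k : ℕ) :
    stepTwoProd u a (k + 1) = stepTwoProd u a k * u (a + 2 * k) :=
  prod_range_succ _ _

theorem stepTwoProd_succ' (a : ℤ) (k : ℕ) :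
    stepTwoProd u a (k + 1) = u a * stepTwoProd u (a + 2) k := by
  rw [stepTwoProd, prod_range_succ', mul_comm]
  push_cast
  congr 1
  · simp
  · exact prod_congr rfl fun j _ => by ring_nf

theorem windowProd_two_mul (a : ℤ) (k : ℕ) :
    windowProd u a (2 * k) = stepTwoProd u a k * stepTwoProd u (a + 1) k := by
  induction k with
  | zero => simp [windowProd, stepTwoProd]
  | succ k ih =>
    simp only [windowProd, stepTwoProd] at ih ⊢
    rw [show 2 * (k + 1) = 2 * k + 1 + 1 by ring, prod_range_succ, prod_range_succ, ih,
      prod_range_succ, prod_range_succ]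
    push_cast
    rw [show a + 1 + 2 * (k : ℤ) = a + (2 * k + 1) by ring]
    ac_rfl

theorem windowProd_add (a : ℤ) (k l : ℕ) :
    windowProd u a (k + l) = windowProd u a k * windowProd u (a + k) l := by
  simp only [windowProd, prod_range_add]
  push_cast
  simp only [add_assoc]

theorem windowProd_mul_eq_mul_windowProd_add_one (a : ℤ) (k : ℕ) :
    windowProd u a k * u (a + k) = u a * windowProd u (a + 1) k := by
  simp only [windowProd]
  rw [← prod_range_succ (fun j : ℕ => u (a + j)), prod_range_succ']
  push_cast
  simp only [add_zero, add_comm, add_left_comm, mul_comm]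

theorem stairProd_zero (h : ℕ) (a b : ℤ) : stairProd u h a b 0 = stepTwoProd u a h := by
  simp [stairProd, stepTwoProd]

theorem stairProd_self (h : ℕ) (a b : ℤ) : stairProd u h a b h = stepTwoProd u b h := by
  simp [stairProd, stepTwoProd]

theorem stairProd_succ_mul {h i : ℕ} (hi : i < h) (a b : ℤ) :
    stairProd u h a b (i + 1) * u (a + 2 * i) = stairProd u h a b i * u (b + 2 * i) := by
  obtain ⟨l, rfl⟩ := Nat.exists_eq_add_of_lt hi
  rw [stairProd, stairProd, show i + l + 1 - i = l + 1 by omega,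
    show i + l + 1 - (i + 1) = l by omega, stepTwoProd_succ, stepTwoProd_succ']
  push_cast
  rw [show a + 2 * ((i : ℤ) + 1) = a + 2 * i + 2 by ring]
  ac_rfl

theorem stairProd_mul_stairProd {h i : ℕ} (hi : i ≤ h) (a : ℤ) :
    stairProd u h a (a + 2 * h + 1) i * stairProd u h (a + 1) (a + 2 * h) i
      = windowProd u (a + 2 * i) (2 * h) := by
  obtain ⟨l, rfl⟩ := Nat.exists_eq_add_of_le hi
  rw [stairProd, stairProd, show i + l - i = l by omega, show 2 * (i + l) = 2 * l + 2 * i by ring,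
    windowProd_add, windowProd_two_mul, windowProd_two_mul]
  push_cast
  rw [show a + 2 * i + 2 * (l : ℤ) = a + 2 * (i + l) by ring,
    show a + 1 + 2 * (i : ℤ) = a + 2 * i + 1 by ring]
  ac_rfl

end CommMonoid

theorem stepTwoProd_ne_zero {M₀ : Type*} [CommMonoidWithZero M₀] [Nontrivial M₀] [NoZeroDivisors M₀]
    {u : ℤ → M₀} (hu : ∀ n, u n ≠ 0) (a : ℤ) (k : ℕ) : stepTwoProd u a k ≠ 0 :=
  prod_ne_zero_iff.mpr fun _ _ => hu _

theorem stairProd_ne_zero {M₀ : Type*} [CommMonoidWithZero M₀] [Nontrivial M₀] [NoZeroDivisors M₀]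
    {u : ℤ → M₀} (hu : ∀ n, u n ≠ 0) (h : ℕ) (a b : ℤ) (i : ℕ) : stairProd u h a b i ≠ 0 :=
  mul_ne_zero (stepTwoProd_ne_zero hu _ _) (stepTwoProd_ne_zero hu _ _)

variable {K : Type*}

def SolvesDTKQ [CommRing K] (N : ℕ) (α β : K) (u : ℤ → K) : Prop :=
  ∀ n : ℤ, ((∑ j ∈ range (N + 1), u (n + j)) + β) * (∏ k ∈ range (N - 1), u (n + k + 1)) = α

theorem SolvesDTKQ.sub_mul_windowProd [CommRing K] {N : ℕ} {α β : K} {u : ℤ → K}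
    (hsol : SolvesDTKQ N α β u) (hN : 1 ≤ N) (m : ℤ) :
    (u (m + N + 1) - u m) * windowProd u (m + 1) N = α * (u (m + 1) - u (m + N)) := by
  obtain ⟨k, rfl⟩ := Nat.exists_eq_add_of_le' hN
  have hsum : ∑ j ∈ range (k + 1 + 1), u (m + 1 + j)
      = ∑ j ∈ range (k + 1 + 1), u (m + j) + u (m + (k + 1 : ℕ) + 1) - u m := by
    rw [sum_range_succ, sum_range_succ' (fun j : ℕ => u (m + j))]
    push_cast
    simp only [add_zero, add_assoc, add_comm (1 : ℤ)]
    ring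
  have hfirst : windowProd u (m + 1) (k + 1) = (∏ j ∈ range k, u (m + j + 1)) * u (m + (k + 1 : ℕ)) := by
    rw [windowProd, prod_range_succ]
    push_cast
    simp only [add_right_comm m, add_assoc]
  have hlast : windowProd u (m + 1) (k + 1) = u (m + 1) * ∏ j ∈ range k, u (m + 1 + j + 1) := by
    rw [windowProd, prod_range_succ']
    push_cast
    simp only [add_zero, add_assoc, mul_comm]
  have e0 := hsol m
  have e1 := hsol (m + 1)
  simp only [Nat.add_sub_cancel] at e0 e1
  linear_combination u (m + 1) * e1 - u (m + (k + 1 : ℕ)) * e0 - windowProd u (m + 1) (k + 1) * hsum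
    - (∑ j ∈ range (k + 1 + 1), u (m + j) + β) * hfirst
    + (∑ j ∈ range (k + 1 + 1), u (m + 1 + j) + β) * hlast

theorem SolvesDTKQ.stairProd_succ_sub [Field K] {h : ℕ} {α β : K} {u : ℤ → K}
    (hsol : SolvesDTKQ (2 * h) α β u) (hu : ∀ n, u n ≠ 0) (n : ℤ) {i : ℕ} (hi : i < h) :
    stairProd u h n (n + 2 * h + 1) (i + 1) - stairProd u h n (n + 2 * h + 1) i
      = α * (1 / stairProd u h (n + 1) (n + 2 * h) (i + 1)
          - 1 / stairProd u h (n + 1) (n + 2 * h) i) := by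
  have hM := stairProd_succ_mul u hi n (n + 2 * h + 1)
  have hL := stairProd_succ_mul u hi (n + 1) (n + 2 * h)
  have hML := stairProd_mul_stairProd u hi.le n
  have hshift := windowProd_mul_eq_mul_windowProd_add_one u (n + 2 * i) (2 * h)
  have hcons := hsol.sub_mul_windowProd (by omega) (n + 2 * i)
  push_cast at hshift hcons
  rw [show n + 2 * h + 1 + 2 * i = n + 2 * i + 2 * h + 1 by ring] at hM
  rw [show n + 1 + 2 * (i : ℤ) = n + 2 * i + 1 by ring,
    show n + 2 * h + 2 * (i : ℤ) = n + 2 * i + 2 * h by ring] at hL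
  rw [eq_div_of_mul_eq (hu _) hM, eq_div_of_mul_eq (hu _) hL]
  have hx := hu (n + 2 * i)
  have hb := hu (n + 2 * i + 2 * h)
  have hL₀ := stairProd_ne_zero hu h (n + 1) (n + 2 * h) i
  field_simp
  linear_combination u (n + 2 * i) * hcons + (u (n + 2 * i + 2 * h + 1) - u (n + 2 * i)) * hshift
    + (u (n + 2 * i + 2 * h + 1) - u (n + 2 * i)) * u (n + 2 * i + 2 * h) * hML

theorem SolvesDTKQ.stepTwoProd_kdv [Field K] {h : ℕ} {α β : K} {u : ℤ → K}
    (hsol : SolvesDTKQ (2 * h) α β u) (hu : ∀ n, u n ≠ 0) (n : ℤ) :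
    stepTwoProd u (n + 2 * h + 1) h - stepTwoProd u n h
      = α * (1 / stepTwoProd u (n + 2 * h) h - 1 / stepTwoProd u (n + 1) h) := by
  rw [← stairProd_self u h n, ← stairProd_zero u h _ (n + 2 * h + 1), ← stairProd_self u h (n + 1),
    ← stairProd_zero u h (n + 1) (n + 2 * h), ← sum_range_sub,
    ← sum_range_sub (fun i => 1 / stairProd u h (n + 1) (n + 2 * h) i), mul_sum]
  exact sum_congr rfl fun i hi => hsol.stairProd_succ_sub hu n (mem_range.mp hi)

end

theorem dtkq_even_to_kdv_reduction_general {K : Type*} [Field K] (N : ℕ)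
    (hNeven : Even N) (α β : K)
    (u : ℤ → K) (hu : ∀ n, u n ≠ 0)
    (hDTKQ : ∀ n : ℤ,
      ((∑ j ∈ Finset.range (N + 1), u (n + j)) + β) *
        (∏ k ∈ Finset.range (N - 1), u (n + k + 1)) = α)
    (v : ℤ → K) (hv : ∀ n : ℤ, v n = ∏ j ∈ Finset.range (N / 2), u (n + 2 * j)) :
    ∀ n : ℤ, v (n + N + 1) - v n = α * (1 / v (n + N) - 1 / v (n + 1)) := by
  obtain ⟨h, rfl⟩ := hNeven
  rw [← two_mul] at hDTKQ hv ⊢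
  have hv' : ∀ n, v n = stepTwoProd u n h := fun n => by
    rw [hv, Nat.mul_div_cancel_left h two_pos, stepTwoProd]
  intro n
  push_cast
  simpa only [hv'] using SolvesDTKQ.stepTwoProd_kdv hDTKQ hu n

/-- for even `N`, `v_n = u_n u_{n+2} ⋯ u_{n+N-2}` built from a solution
of the generalized DTKQ equation satisfies the `(N,1)` periodic reduction of Hirota's
lattice KdV equation, `v_{n+N+1} - v_n = α(1/v_{n+N} - 1/v_{n+1})`. -/
theorem dtkq_even_to_kdv_reduction {K : Type*} [Field K] (N : ℕ) (hN : 2 ≤ N)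
    (hNeven : Even N) (α β : K)
    (u : ℤ → K) (hu : ∀ n, u n ≠ 0)
    (hDTKQ : ∀ n : ℤ,
      ((∑ j ∈ Finset.range (N + 1), u (n + j)) + β) *
        (∏ k ∈ Finset.range (N - 1), u (n + k + 1)) = α)
    (v : ℤ → K) (hv : ∀ n : ℤ, v n = ∏ j ∈ Finset.range (N / 2), u (n + 2 * j)) :
    ∀ n : ℤ, v (n + N + 1) - v n = α * (1 / v (n + N) - 1 / v (n + 1)) :=
  dtkq_even_to_kdv_reduction_general N hNeven α β u hu hDTKQ v hv
end

section
/- Let K be a field, N ≥ 3 an ODD integer, and α ∈ K. Suppose u : ℤ → K satisfies u_n ≠ 0 for all n and satisfies the lifted DTKQ equation of order N+1 with parameter α for all n ∈ ℤ. Set s_n := u_n·u_{n+1}. Then the quantity K̄[u]_n := (∏_{j=0}^{N−1} s_{n+2j} − α²)·(s_{n+N−1})^{(N−1)/2}·∏_{k=1}^{(N−3)/2} (s_{n+2k}·s_{n+2N−2k−2})^{k} is independent of n, i.e. it is a first integral of the lifted DTKQ equation. -/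
/-!
Put `B n = u n ⋯ u (n + N - 1)` and `R n = B n - α`. Clearing denominators, the lifted equation
becomes `R (n + 2) u (n + 1) = R n u (n + N)`, which telescopes along steps of 2. The monomial
factor `G n` of `K̄` is a product of nested blocks of consecutive `u`'s, and shifting it by one
multiplies it by the same ratio of alternate `u`'s that the telescoped relation produces over
`(N - 1) / 2` steps, so `R (n + 1) G (n + 1) = R (n + N) G n`; shifting `G` by two and using the
relation once gives `B (n + 1) R (n + 2) G (n + 2) = B (n + N) R n G n`. Now `K̄ n = (B n B (n + N) - α²) G n` splits
both as `B n R (n + N) G n + α R n G n` and as `B (n + N) R n G n + α R (n + N) G n`, and the two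
relations carry the first splitting at `n + 1` to the second one at `n`.
-/

open Finset

namespace DTKQ

section CommMonoid

variable {M : Type*} [CommMonoid M]

theorem prod_pow_succ_range_succ (P : ℕ → M) (c : ℕ) :
    ∏ k ∈ range (c + 1), P k ^ (k + 1) =
      (∏ k ∈ range (c + 1), P k) * ∏ k ∈ range c, P (k + 1) ^ (k + 1) := by
  simp only [pow_succ', prod_mul_distrib, prod_range_succ' (fun k => P k ^ k), pow_zero, mul_one]

variable (f : ℤ → M)

def blockProd (m : ℤ) (c : ℕ) : M := ∏ j ∈ range c, f (m + j)

def altProd (m : ℤ) (c : ℕ) : M := ∏ i ∈ range c, f (m + 2 * i)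

def nestedBlockProd : ℤ → ℕ → M
  | _, 0 => 1
  | m, e + 1 => blockProd f m (4 * e + 2) * nestedBlockProd (m + 2) e

theorem blockProd_succ (m : ℤ) (c : ℕ) : blockProd f m (c + 1) = blockProd f m c * f (m + c) :=
  prod_range_succ _ _

theorem blockProd_succ' (m : ℤ) (c : ℕ) :
    blockProd f m (c + 1) = f m * blockProd f (m + 1) c := by
  rw [blockProd, prod_range_succ', mul_comm, blockProd]
  push_cast
  simp only [add_zero, add_assoc, add_comm (1 : ℤ)]

theorem blockProd_add (m : ℤ) (a b : ℕ) :
    blockProd f m (a + b) = blockProd f m a * blockProd f (m + a) b := by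
  simp only [blockProd, prod_range_add, Nat.cast_add, add_assoc]

theorem blockProd_two_mul (m : ℤ) (c : ℕ) :
    blockProd f m (2 * c) = ∏ i ∈ range c, f (m + 2 * i) * f (m + 2 * i + 1) := by
  induction c with
  | zero => simp [blockProd]
  | succ c ih =>
    rw [show 2 * (c + 1) = 2 * c + 1 + 1 by ring, blockProd_succ, blockProd_succ, ih,
      prod_range_succ, mul_assoc]
    push_cast
    ring_nf

theorem altProd_succ (m : ℤ) (c : ℕ) : altProd f m (c + 1) = altProd f m c * f (m + 2 * c) :=
  prod_range_succ _ _

theorem altProd_succ' (m : ℤ) (c : ℕ) : altProd f m (c + 1) = f m * altProd f (m + 2) c := by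
  rw [altProd, prod_range_succ', mul_comm, altProd]
  push_cast
  ring_nf

theorem altProd_mul_altProd_add_one (m : ℤ) (c : ℕ) :
    altProd f m c * altProd f (m + 1) c = blockProd f m (2 * c) := by
  simp only [altProd, blockProd_two_mul, ← prod_mul_distrib, add_right_comm m 1]

theorem altProd_two_mul_add_one (m : ℤ) (c : ℕ) :
    altProd f m (2 * c + 1) =
      (∏ k ∈ range c, f (m + 2 * k) * f (m + 4 * c - 2 * k)) * f (m + 2 * c) := by
  induction c generalizing m with
  | zero => simp [altProd]
  | succ c ih =>
    rw [show 2 * (c + 1) + 1 = 2 * c + 1 + 1 + 1 by ring, altProd_succ', altProd_succ, ih,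
      prod_range_succ']
    have hinner : ∏ k ∈ range c, f (m + 2 + 2 * k) * f (m + 2 + 4 * c - 2 * k) =
        ∏ k ∈ range c, f (m + 2 * ↑(k + 1)) * f (m + 4 * ↑(c + 1) - 2 * ↑(k + 1)) :=
      prod_congr rfl fun k _ => by push_cast; ring_nf
    rw [hinner]
    push_cast
    ring_nf
    ac_rfl

theorem mul_altProd_eq_of_forall_add_two (R : ℤ → M) (p q : ℤ)
    (h : ∀ n, R (n + 2) * f (n + p) = R n * f (n + q)) (m : ℤ) (k : ℕ) :
    R (m + 2 * k) * altProd f (m + p) k = R m * altProd f (m + q) k := by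
  induction k with
  | zero => simp [altProd]
  | succ k ih =>
    calc R (m + 2 * ↑(k + 1)) * altProd f (m + p) (k + 1)
        = R (m + 2 * k + 2) * f (m + 2 * k + p) * altProd f (m + p) k := by
          rw [altProd_succ]; push_cast; ring_nf; ac_rfl
      _ = R (m + 2 * k) * altProd f (m + p) k * f (m + 2 * k + q) := by rw [h]; ac_rfl
      _ = R m * altProd f (m + q) (k + 1) := by
          rw [ih, altProd_succ, mul_assoc, add_right_comm m]

theorem nestedBlockProd_add_one_mul (m : ℤ) (e : ℕ) :
    nestedBlockProd f (m + 1) e * altProd f m e =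
      nestedBlockProd f m e * altProd f (m + 2 * e) e := by
  induction e generalizing m with
  | zero => simp [nestedBlockProd, altProd]
  | succ e ih =>
    calc nestedBlockProd f (m + 1) (e + 1) * altProd f m (e + 1)
        = (f m * blockProd f (m + 1) (4 * e + 2)) *
            (nestedBlockProd f (m + 2 + 1) e * altProd f (m + 2) e) := by
          rw [nestedBlockProd, altProd_succ', add_right_comm]
          ac_rfl
      _ = (blockProd f m (4 * e + 2) * f (m + 4 * e + 2)) *
            (nestedBlockProd f (m + 2) e * altProd f (m + 2 + 2 * e) e) := by
          rw [← blockProd_succ', blockProd_succ, ih]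
          push_cast
          ring_nf
      _ = nestedBlockProd f m (e + 1) * altProd f (m + 2 * ↑(e + 1)) (e + 1) := by
          rw [nestedBlockProd, altProd_succ]
          push_cast
          ring_nf
          ac_rfl

theorem nestedBlockProd_add_two_mul (m : ℤ) (e : ℕ) :
    nestedBlockProd f (m + 2) e * blockProd f m (2 * e) =
      nestedBlockProd f m e * blockProd f (m + 2 * e) (2 * e) := by
  rw [← altProd_mul_altProd_add_one, ← altProd_mul_altProd_add_one,
    show m + 2 = m + 1 + 1 by ring]
  calc nestedBlockProd f (m + 1 + 1) e * (altProd f m e * altProd f (m + 1) e)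
      = nestedBlockProd f (m + 1 + 1) e * altProd f (m + 1) e * altProd f m e := by ac_rfl
    _ = nestedBlockProd f (m + 1) e * altProd f m e * altProd f (m + 1 + 2 * e) e := by
        rw [nestedBlockProd_add_one_mul]; ac_rfl
    _ = _ := by rw [nestedBlockProd_add_one_mul, add_right_comm m 1, mul_assoc]

theorem blockProd_mul_nestedBlockProd_mul (m : ℤ) (e : ℕ) :
    blockProd f m (2 * e + 1) * nestedBlockProd f (m + 3) e * f (m + 2 * e) =
      blockProd f (m + 2 * e) (2 * e + 1) * nestedBlockProd f (m + 1) e * f m := by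
  have h := nestedBlockProd_add_two_mul f (m + 1) e
  rw [blockProd_succ', blockProd_succ', show m + 3 = m + 1 + 2 by ring,
    show m + 2 * e + 1 = m + 1 + 2 * e by ring]
  calc f m * blockProd f (m + 1) (2 * e) * nestedBlockProd f (m + 1 + 2) e * f (m + 2 * e)
      = f m * f (m + 2 * e) *
          (nestedBlockProd f (m + 1 + 2) e * blockProd f (m + 1) (2 * e)) := by
        ac_rfl
    _ = _ := by rw [h]; ac_rfl

variable {f} {s : ℤ → M}

theorem blockProd_two_mul_eq_altProd (hs : ∀ n, s n = f n * f (n + 1)) (m : ℤ) (c : ℕ) :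
    blockProd f m (2 * c) = altProd s m c := by
  simp only [blockProd_two_mul, altProd, hs]

theorem altProd_eq_blockProd_mul_blockProd (hs : ∀ n, s n = f n * f (n + 1)) (m : ℤ) (c : ℕ) :
    altProd s m c = blockProd f m c * blockProd f (m + c) c := by
  rw [← blockProd_two_mul_eq_altProd hs, two_mul, blockProd_add]

theorem nestedBlockProd_eq_prod_pow (hs : ∀ n, s n = f n * f (n + 1)) (m : ℤ) (e : ℕ) :
    nestedBlockProd f m (e + 1) =
      s (m + 2 * e) ^ (e + 1) *
        ∏ k ∈ range e, (s (m + 2 * k) * s (m + 4 * e - 2 * k)) ^ (k + 1) := by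
  induction e generalizing m with
  | zero => simp [nestedBlockProd, blockProd_two_mul_eq_altProd hs m 1, altProd]
  | succ e ih =>
    rw [nestedBlockProd, ih, show 4 * (e + 1) + 2 = 2 * (2 * (e + 1) + 1) by ring,
      blockProd_two_mul_eq_altProd hs, altProd_two_mul_add_one, prod_pow_succ_range_succ]
    have hinner : ∏ k ∈ range e, (s (m + 2 + 2 * k) * s (m + 2 + 4 * e - 2 * k)) ^ (k + 1) =
        ∏ k ∈ range e,
          (s (m + 2 * ↑(k + 1)) * s (m + 4 * ↑(e + 1) - 2 * ↑(k + 1))) ^ (k + 1) :=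
      prod_congr rfl fun k _ => by push_cast; ring_nf
    rw [hinner, show m + 2 + 2 * (e : ℤ) = m + 2 * ↑(e + 1) by push_cast; ring,
      pow_succ _ (e + 1)]
    ac_rfl

end CommMonoid

variable {K : Type*} [Field K]

def liftedDTKQ (N : ℕ) (α : K) (u : ℤ → K) (n : ℤ) : K :=
  u (n + N + 1) - u n +
    α * (1 / ∏ j ∈ range (N - 1), u (n + j + 1) - 1 / ∏ j ∈ range (N - 1), u (n + j + 2))

theorem blockProd_sub_mul_of_liftedDTKQ {N : ℕ} (hN : 1 ≤ N) {α : K} {u : ℤ → K}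
    (hu : ∀ n, u n ≠ 0) {n : ℤ} (h : liftedDTKQ N α u n = 0) :
    (blockProd u (n + 2) N - α) * u (n + 1) = (blockProd u n N - α) * u (n + N) := by
  obtain ⟨L, rfl⟩ : ∃ L, N = L + 1 := ⟨N - 1, by omega⟩
  set P := blockProd u (n + 1) L
  set Q := blockProd u (n + 2) L
  have hP0 : P ≠ 0 := prod_ne_zero_iff.mpr fun _ _ => hu _
  have hQ0 : Q ≠ 0 := prod_ne_zero_iff.mpr fun _ _ => hu _
  have hcleared : (u (n + 2 + L) - u n) * P * Q + α * (Q - P) = 0 := by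
    have hP : ∏ j ∈ range L, u (n + j + 1) = P :=
      prod_congr rfl fun j _ => by rw [add_right_comm]
    have hQ : ∏ j ∈ range L, u (n + j + 2) = Q :=
      prod_congr rfl fun j _ => by rw [add_right_comm]
    rw [liftedDTKQ, Nat.add_sub_cancel, hP, hQ] at h
    field_simp at h
    rwa [show n + ↑(L + 1) + 1 = n + 2 + L by push_cast; ring, mul_zero] at h
  have hmid := (blockProd_succ' u (n + 1) L).symm.trans (blockProd_succ u (n + 1) L)
  rw [show n + 1 + 1 = n + 2 by ring,
    show n + 1 + (L : ℤ) = n + ↑(L + 1) by push_cast; ring] at hmid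
  apply mul_left_cancel₀ hP0
  rw [blockProd_succ' u n L, blockProd_succ u (n + 2) L]
  linear_combination u (n + 1) * hcleared + (u n * P - α) * hmid

theorem periodic_of_shift_relations {R : Type*} [CommRing R] (B G : ℤ → R) (α : R)
    (d : ℤ)
    (h1 : ∀ n, (B (n + 1) - α) * G (n + 1) = (B (n + d) - α) * G n)
    (h2 : ∀ n, B (n + 1) * ((B (n + 2) - α) * G (n + 2)) = B (n + d) * ((B n - α) * G n)) :
    Function.Periodic (fun n => (B n * B (n + d) - α ^ 2) * G n) 1 := by
  intro n
  have h1' := h1 (n + 1)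
  rw [show n + 1 + 1 = n + 2 by ring] at h1'
  linear_combination h2 n - B (n + 1) * h1' + α * h1 n

theorem sub_mul_nestedBlockProd_add_one {N e : ℕ} (hNe : N = 2 * e + 3) {α : K} {u : ℤ → K}
    (hu : ∀ n, u n ≠ 0) (hlift : ∀ n, liftedDTKQ N α u n = 0) (n : ℤ) :
    (blockProd u (n + 1) N - α) * nestedBlockProd u (n + 1 + 2) (e + 1) =
      (blockProd u (n + N) N - α) * nestedBlockProd u (n + 2) (e + 1) := by
  have hNz : (N : ℤ) = 2 * e + 3 := by exact_mod_cast hNe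
  have htel := mul_altProd_eq_of_forall_add_two u (fun n => blockProd u n N - α) 1 N
    (fun n => blockProd_sub_mul_of_liftedDTKQ (by omega) hu (hlift n)) (n + 1) (e + 1)
  have hnest := nestedBlockProd_add_one_mul u (n + 2) (e + 1)
  have ha : altProd u (n + 2) (e + 1) ≠ 0 := prod_ne_zero_iff.mpr fun _ _ => hu _
  rw [show n + 1 + 2 * ((e + 1 : ℕ) : ℤ) = n + N by push_cast; omega,
    show n + 1 + (N : ℤ) = n + 2 + 2 * ((e + 1 : ℕ) : ℤ) by push_cast; omega,
    show n + 1 + 1 = n + 2 by ring] at htel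
  rw [show n + 1 + 2 = n + 2 + 1 by ring]
  apply mul_right_cancel₀ ha
  linear_combination
    (blockProd u (n + 1) N - α) * hnest - nestedBlockProd u (n + 2) (e + 1) * htel

theorem blockProd_mul_sub_mul_nestedBlockProd_add_two {N e : ℕ} (hNe : N = 2 * e + 3) {α : K}
    {u : ℤ → K} (hu : ∀ n, u n ≠ 0) (hlift : ∀ n, liftedDTKQ N α u n = 0) (n : ℤ) :
    blockProd u (n + 1) N *
        ((blockProd u (n + 2) N - α) * nestedBlockProd u (n + 2 + 2) (e + 1)) =
      blockProd u (n + N) N * ((blockProd u n N - α) * nestedBlockProd u (n + 2) (e + 1)) := by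
  have hNz : (N : ℤ) = 2 * e + 3 := by exact_mod_cast hNe
  have hstep := blockProd_sub_mul_of_liftedDTKQ (by omega) hu (hlift n)
  have hmon := blockProd_mul_nestedBlockProd_mul u (n + 1) (e + 1)
  rw [show 2 * (e + 1) + 1 = N by omega,
    show n + 1 + 2 * ((e + 1 : ℕ) : ℤ) = n + N by push_cast; omega,
    show n + 1 + 3 = n + 2 + 2 by ring, show n + 1 + 1 = n + 2 by ring] at hmon
  apply mul_right_cancel₀ (hu (n + 1))
  linear_combination (blockProd u n N - α) * hmon +
    blockProd u (n + 1) N * nestedBlockProd u (n + 2 + 2) (e + 1) * hstep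

end DTKQ

open DTKQ

/-- for odd `N`, with `s_n = u_n u_{n+1}`, the quantity
`K̄[u]_n = (∏_{j=0}^{N-1} s_{n+2j} − α²)·s_{n+N-1}^{(N-1)/2}·∏_{k=1}^{(N-3)/2}(s_{n+2k}s_{n+2N-2k-2})^k`
is a first integral of the lifted DTKQ equation. -/
theorem lifted_dtkq_odd_first_integral {K : Type*} [Field K] (N : ℕ) (hN : 3 ≤ N)
    (hNodd : Odd N) (α : K)
    (u : ℤ → K) (hu : ∀ n, u n ≠ 0)
    (hlift : ∀ n : ℤ,
      u (n + N + 1) - u n +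
        α * (1 / ∏ j ∈ Finset.range (N - 1), u (n + j + 1) -
          1 / ∏ j ∈ Finset.range (N - 1), u (n + j + 2)) = 0)
    (s : ℤ → K) (hs : ∀ n : ℤ, s n = u n * u (n + 1))
    (F : ℤ → K)
    (hF : ∀ n : ℤ, F n =
      ((∏ j ∈ Finset.range N, s (n + 2 * j)) - α ^ 2) *
        (s (n + N - 1)) ^ ((N - 1) / 2) *
        ∏ k ∈ Finset.range ((N - 3) / 2),
          (s (n + 2 * k + 2) * s (n + 2 * N - 2 * k - 4)) ^ (k + 1)) :
    ∀ m n : ℤ, F m = F n := by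
  obtain ⟨e, hNe⟩ : ∃ e, N = 2 * e + 3 := by
    obtain ⟨t, ht⟩ := hNodd
    exact ⟨t - 1, by omega⟩
  have hNz : (N : ℤ) = 2 * e + 3 := by exact_mod_cast hNe
  have hFG : F = fun n =>
      (blockProd u n N * blockProd u (n + N) N - α ^ 2) * nestedBlockProd u (n + 2) (e + 1) := by
    funext n
    rw [hF, mul_assoc, nestedBlockProd_eq_prod_pow hs, show (N - 1) / 2 = e + 1 by omega,
      show (N - 3) / 2 = e by omega, show n + N - 1 = n + 2 + 2 * e by omega]
    congr 2
    · exact altProd_eq_blockProd_mul_blockProd hs n N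
    · exact prod_congr rfl fun k _ => by congr 3 <;> omega
  have hper : Function.Periodic F 1 := by
    rw [hFG]
    exact periodic_of_shift_relations _ _ α N (sub_mul_nestedBlockProd_add_one hNe hu hlift)
      (blockProd_mul_sub_mul_nestedBlockProd_add_two hNe hu hlift)
  intro m n
  simpa using (hper.int_mul_eq m).trans (hper.int_mul_eq n).symm
end

section
/- Let K be a field, P ≥ 2 an integer, and α ∈ K. Suppose T : ℤ → K satisfies T_n ≠ 0 for all n, and set v_n := T_n/T_{n+1}. (i) If v satisfies the reduced discrete Toda equation v_n/v_{n+P} − v_{n−P}/v_n + α²·(v_{n+P−1}/v_n − v_n/v_{n+1−P}) = 0 for all n ∈ ℤ, then there exists a constant K̄ ∈ K such that T satisfies the bilinear equation T_{n+2P}·T_n = α²·T_{n+2P−1}·T_{n+1} + K̄·(T_{n+P})² for all n ∈ ℤ. (ii) Conversely, if there exists K̄ ∈ K such that T satisfies T_{n+2P}·T_n = α²·T_{n+2P−1}·T_{n+1} + K̄·(T_{n+P})² for all n ∈ ℤ, then v satisfies the reduced discrete Toda equation for all n ∈ ℤ. -/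
/-!
Put `v n = T n / T (n + 1)` and let `κ m = (T (m + 2P) T m - α² T (m + 2P - 1) T (m + 1)) / T (m + P)²`,
the value of `K̄` that the bilinear equation at `m` forces. Clearing denominators, the left-hand
side of the reduced Toda equation at `n = m + P` equals `κ (m + 1) - κ m` times a nonzero factor.
So the Toda equation holds everywhere iff `κ` is `1`-periodic, i.e. constant on `ℤ`, which is
exactly the bilinear equation with `K̄` that constant.
-/

namespace Toda

variable {K : Type*} [Field K]

def todaResidual (P : ℕ) (α : K) (v : ℤ → K) (n : ℤ) : K :=
  v n / v (n + P) - v (n - P) / v n + α ^ 2 * (v (n + P - 1) / v n - v n / v (n + 1 - P))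

def bilinearRatio (P : ℕ) (α : K) (T : ℤ → K) (m : ℤ) : K :=
  (T (m + 2 * P) * T m - α ^ 2 * (T (m + 2 * P - 1) * T (m + 1))) / T (m + P) ^ 2

variable {P : ℕ} {α : K} {T : ℤ → K}

theorem bilinear_eq_iff_bilinearRatio_eq (hT : ∀ n, T n ≠ 0) (c : K) (m : ℤ) :
    T (m + 2 * P) * T m = α ^ 2 * (T (m + 2 * P - 1) * T (m + 1)) + c * T (m + P) ^ 2 ↔
      bilinearRatio P α T m = c := by
  rw [bilinearRatio, div_eq_iff (pow_ne_zero 2 (hT _)), ← sub_eq_iff_eq_add']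

theorem todaResidual_add_eq (hT : ∀ n, T n ≠ 0) (m : ℤ) :
    todaResidual P α (fun n => T n / T (n + 1)) (m + P) =
      (bilinearRatio P α T (m + 1) - bilinearRatio P α T m) *
        (T (m + P) * T (m + P + 1) / (T (m + 2 * P) * T (m + 1))) := by
  simp only [todaResidual, bilinearRatio]
  field_simp [hT]
  ring_nf

theorem todaResidual_eq_zero_iff_periodic (hT : ∀ n, T n ≠ 0) :
    (∀ n, todaResidual P α (fun n => T n / T (n + 1)) n = 0) ↔
      Function.Periodic (bilinearRatio P α T) 1 := by
  refine ⟨fun h m => ?_, fun h n => ?_⟩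
  · simpa [todaResidual_add_eq hT, hT, sub_eq_zero] using h (m + P)
  · rw [← sub_add_cancel n (P : ℤ), todaResidual_add_eq hT, h (n - P), sub_self, zero_mul]

end Toda

open Toda in
theorem toda_reduction_bilinear_equiv_general {K : Type*} [Field K] (P : ℕ) (α : K)
    (T : ℤ → K) (hT : ∀ n, T n ≠ 0)
    (v : ℤ → K) (hv : ∀ n : ℤ, v n = T n / T (n + 1)) :
    ((∀ n : ℤ, v n / v (n + P) - v (n - P) / v n +
        α ^ 2 * (v (n + P - 1) / v n - v n / v (n + 1 - P)) = 0) →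
      ∃ Kbar : K, ∀ n : ℤ,
        T (n + 2 * P) * T n = α ^ 2 * (T (n + 2 * P - 1) * T (n + 1)) +
          Kbar * (T (n + P)) ^ 2) ∧
    (∀ Kbar : K, (∀ n : ℤ,
        T (n + 2 * P) * T n = α ^ 2 * (T (n + 2 * P - 1) * T (n + 1)) +
          Kbar * (T (n + P)) ^ 2) →
      ∀ n : ℤ, v n / v (n + P) - v (n - P) / v n +
        α ^ 2 * (v (n + P - 1) / v n - v n / v (n + 1 - P)) = 0) := by
  obtain rfl : v = fun n => T n / T (n + 1) := funext hv
  refine ⟨fun htoda => ?_, fun Kbar hbilinear => ?_⟩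
  · have hperiodic := (todaResidual_eq_zero_iff_periodic hT).1 htoda
    refine ⟨bilinearRatio P α T 0, fun m => (bilinear_eq_iff_bilinearRatio_eq hT _ m).2 ?_⟩
    simpa using hperiodic.int_mul_eq m
  · refine (todaResidual_eq_zero_iff_periodic hT).2 fun m => ?_
    rw [(bilinear_eq_iff_bilinearRatio_eq hT Kbar m).1 (hbilinear m),
      (bilinear_eq_iff_bilinearRatio_eq hT Kbar (m + 1)).1 (hbilinear (m + 1))]

/-- with `v_n = T_n/T_{n+1}`, the reduced discrete Toda equation for `v`
is equivalent to the bilinear equation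
`T_{n+2P} T_n = α² T_{n+2P-1} T_{n+1} + K̄ (T_{n+P})²` for some constant `K̄`. -/
theorem toda_reduction_bilinear_equiv {K : Type*} [Field K] (P : ℕ) (hP : 2 ≤ P) (α : K)
    (T : ℤ → K) (hT : ∀ n, T n ≠ 0)
    (v : ℤ → K) (hv : ∀ n : ℤ, v n = T n / T (n + 1)) :
    ((∀ n : ℤ, v n / v (n + P) - v (n - P) / v n +
        α ^ 2 * (v (n + P - 1) / v n - v n / v (n + 1 - P)) = 0) →
      ∃ Kbar : K, ∀ n : ℤ,
        T (n + 2 * P) * T n = α ^ 2 * (T (n + 2 * P - 1) * T (n + 1)) +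
          Kbar * (T (n + P)) ^ 2) ∧
    (∀ Kbar : K, (∀ n : ℤ,
        T (n + 2 * P) * T n = α ^ 2 * (T (n + 2 * P - 1) * T (n + 1)) +
          Kbar * (T (n + P)) ^ 2) →
      ∀ n : ℤ, v n / v (n + P) - v (n - P) / v n +
        α ^ 2 * (v (n + P - 1) / v n - v n / v (n + 1 - P)) = 0) :=
  toda_reduction_bilinear_equiv_general P α T hT v hv
end

section
/- Let K be an infinite field and α ∈ K with α ≠ 0. For p, v, u, η ∈ K with v ≠ 0, define the 2×2 matrices L(p, v, η) := [[p + η, v], [−v⁻¹, 0]] and M(u, v, η) := [[1 − α²·u·v⁻¹ − α·η, −α·u], [α·v⁻¹, 1]]. Let V : ℤ×ℤ → K with V_{k,l} ≠ 0 for all k, l, and let Π : ℤ×ℤ → K. Then the discrete zero-curvature equation L(Π_{k,l}, V_{k,l}, η)·M(V_{k+1,l}, V_{k,l+1}, η) = M(V_{k+1,l−1}, V_{k,l}, η)·L(Π_{k+1,l}, V_{k+1,l}, η) holds for all k, l ∈ ℤ and all η ∈ K if and only if both of the following hold for all k, l ∈ ℤ: Π_{k+1,l} = α·V_{k+1,l}/V_{k,l+1}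 + α⁻¹·(V_{k,l}/V_{k+1,l} − 1), and V satisfies the discrete Toda equation V_{k,l}/V_{k+1,l} − V_{k−1,l}/V_{k,l} + α²·(V_{k+1,l−1}/V_{k,l} − V_{k,l}/V_{k−1,l+1}) = 0. -/
/-!
The spectral parameter drops out of the off-diagonal entries of `L M - M L`, and each of them
is linear in just one of `Π_{k,l}`, `Π_{k+1,l}`: solving them gives a formula for each, after
which the `(1,1)` entry holds identically and the `(2,2)` entry trivially. So the zero-curvature
equation at a single `η` already says that `Π_{k,l}` and `Π_{k+1,l}` are given by these
formulas. The formula for `Π_{k+1,l}` at `(k - 1, l)` is a second expression for `Π_{k,l}`, and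
equating the two expressions is the discrete Toda equation.
-/

/-- The Lax matrix `L(p, v, η)` of the discrete Toda lattice. -/
def laxL {K : Type*} [Field K] (p v η : K) : Matrix (Fin 2) (Fin 2) K :=
  !![p + η, v; -v⁻¹, 0]

/-- The Lax matrix `M(u, v, η)` (depending on the parameter `α`) of the discrete
Toda lattice. -/
def laxM {K : Type*} [Field K] (α u v η : K) : Matrix (Fin 2) (Fin 2) K :=
  !![1 - α ^ 2 * u * v⁻¹ - α * η, -α * u; α * v⁻¹, 1]

theorem eq_iff_eq_zero_of_sub_eq_mul {R : Type*} [Ring R] [NoZeroDivisors R] {x y c z : R}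
    (hc : c ≠ 0) (h : x - y = c * z) : x = y ↔ z = 0 := by
  rw [← sub_eq_zero, h, mul_eq_zero, or_iff_right hc]

section

variable {K : Type*} [Field K] {α : K}

theorem laxL_mul_laxM_eq_laxM_mul_laxL_iff (hα : α ≠ 0) {p q a b c d : K}
    (ha : a ≠ 0) (hb : b ≠ 0) (η : K) :
    laxL p a η * laxM α b c η = laxM α d a η * laxL q b η ↔
      p = α * d / a + α⁻¹ * (a / b - 1) ∧ q = α * b / c + α⁻¹ * (a / b - 1) := by
  simp only [laxL, laxM, Matrix.mul_fin_two, ← Matrix.ext_iff, Fin.forall_fin_two,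
    Matrix.of_apply, Matrix.cons_val', Matrix.cons_val_zero, Matrix.cons_val_one,
    Matrix.empty_val', Matrix.cons_val_fin_one]
  constructor
  · rintro ⟨⟨-, h01⟩, h10, -⟩
    exact ⟨sub_eq_zero.1 ((eq_iff_eq_zero_of_sub_eq_mul (c := -α * b) (by simp [hα, hb])
        (by field_simp; ring)).1 h01),
      sub_eq_zero.1 ((eq_iff_eq_zero_of_sub_eq_mul (c := -α / a) (by simp [hα, ha])
        (by field_simp; ring)).1 h10)⟩
  · rintro ⟨rfl, rfl⟩
    refine ⟨⟨?_, ?_⟩, ?_, ?_⟩ <;> field_simp <;> ring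

theorem pi_formulas_eq_iff_toda (hα : α ≠ 0) {a : K} (ha : a ≠ 0) (b d e f : K) :
    α * a / e + α⁻¹ * (f / a - 1) = α * d / a + α⁻¹ * (a / b - 1) ↔
      a / b - f / a + α ^ 2 * (d / a - a / e) = 0 :=
  eq_iff_eq_zero_of_sub_eq_mul (neg_ne_zero.2 (inv_ne_zero hα)) (by field_simp; ring)

end

theorem toda_zero_curvature_equiv_general {K : Type*} [Field K]
    (α : K) (hα : α ≠ 0)
    (V : ℤ → ℤ → K) (hV : ∀ k l, V k l ≠ 0)
    (Q : ℤ → ℤ → K) :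
    (∀ (k l : ℤ) (η : K),
      laxL (Q k l) (V k l) η * laxM α (V (k + 1) l) (V k (l + 1)) η =
        laxM α (V (k + 1) (l - 1)) (V k l) η * laxL (Q (k + 1) l) (V (k + 1) l) η) ↔
    ((∀ k l : ℤ, Q (k + 1) l =
        α * V (k + 1) l / V k (l + 1) + α⁻¹ * (V k l / V (k + 1) l - 1)) ∧
     (∀ k l : ℤ, V k l / V (k + 1) l - V (k - 1) l / V k l +
        α ^ 2 * (V (k + 1) (l - 1) / V k l - V k l / V (k - 1) (l + 1)) = 0)) := by
  simp only [laxL_mul_laxM_eq_laxM_mul_laxL_iff hα (hV _ _) (hV _ _), forall_const, forall_and]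
  rw [and_comm]
  refine and_congr_right fun hQ => forall₂_congr fun k l => ?_
  have hQ_shift := hQ (k - 1) l
  rw [sub_add_cancel] at hQ_shift
  rw [hQ_shift, pi_formulas_eq_iff_toda hα (hV k l)]

/-- the discrete zero-curvature equation
`L(Π_{k,l}, V_{k,l}, η) M(V_{k+1,l}, V_{k,l+1}, η) = M(V_{k+1,l-1}, V_{k,l}, η) L(Π_{k+1,l}, V_{k+1,l}, η)`
(for all `k`, `l`, `η`) is equivalent to the formula for `Π_{k+1,l}` together with the
discrete time Toda lattice equation for `V`. -/
theorem toda_zero_curvature_equiv {K : Type*} [Field K] [Infinite K]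
    (α : K) (hα : α ≠ 0)
    (V : ℤ → ℤ → K) (hV : ∀ k l, V k l ≠ 0)
    (Q : ℤ → ℤ → K) :
    (∀ (k l : ℤ) (η : K),
      laxL (Q k l) (V k l) η * laxM α (V (k + 1) l) (V k (l + 1)) η =
        laxM α (V (k + 1) (l - 1)) (V k l) η * laxL (Q (k + 1) l) (V (k + 1) l) η) ↔
    ((∀ k l : ℤ, Q (k + 1) l =
        α * V (k + 1) l / V k (l + 1) + α⁻¹ * (V k l / V (k + 1) l - 1)) ∧
     (∀ k l : ℤ, V k l / V (k + 1) l - V (k - 1) l / V k l +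
        α ^ 2 * (V (k + 1) (l - 1) / V k l - V k l / V (k - 1) (l + 1)) = 0)) :=
  toda_zero_curvature_equiv_general α hα V hV Q
end

section
/- Let K be a field, P ≥ 2 an integer, and α ∈ K with α ≠ 0. Suppose v : ℤ → K satisfies v_n ≠ 0 for all n and satisfies the reduced discrete Toda equation v_n/v_{n+P} − v_{n−P}/v_n + α²·(v_{n+P−1}/v_n − v_n/v_{n+1−P}) = 0 for all n ∈ ℤ. Define p_n := α·v_n/v_{n−P+1} + α⁻¹·(v_{n−P}/v_n − 1), and for η ∈ K set L_n(η) := L(p_n, v_n, η) and M_n(η) := M(v_n, v_{n−P+1}, η), where L(p, v, η) = [[p + η, v], [−v⁻¹, 0]] and M(u, v, η) = [[1 − α²·u·v⁻¹ − α·η, −α·u], [α·v⁻¹, 1]]. Then: (i) L_n(η)·M_{n+P}(η) = M_{n+P−1}(η)·L_{n+P}(η) for all n ∈ ℤ and η ∈ K; and (ii) for every η ∈ K with α·η ≠ 1, the monodromy matrix 𝓜_n(η) := (1 − α·η)·M_n(η)⁻¹·L_{n−P+1}(η)·L_{n−P+2}(η)·⋯·L_{n−1}(η)·L_n(η) satisfies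 the discrete Lax equation 𝓜_n(η)·L_{n+1}(η) = L_{n+1}(η)·𝓜_{n+1}(η) for all n ∈ ℤ. -/
/-!
Part (i) is a direct computation with the 2×2 matrices: after eliminating `v_{n-P}` by the
reduced Toda equation, the entries of both sides agree as rational functions.

For part (ii), (i) at `n + 1 - P` gives `M_n⁻¹ L_{n+1-P} M_{n+1} = L_{n+1}`, since
`det M = 1 - αη` is a unit. Appending `L_{n+1}` to the product `L_{n-P+1} ⋯ L_n` is the
same as prepending `L_{n+1-P}` to `L_{n+2-P} ⋯ L_{n+1}`, so inserting `M_{n+1} M_{n+1}⁻¹`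
after the first factor turns `𝓜_n L_{n+1}` into `L_{n+1} 𝓜_{n+1}`.
-/

-- `List.range P` used as a `List ℤ` elaborates to the monadic coercion
-- `do let a ← List.range P; pure ↑a`.
lemma List.map_coe_range_eq {M : Type*} (P : ℕ) (f : ℤ → M) :
    (List.range P).map (fun j : ℤ => f j) = (List.range P).map (fun j : ℕ => f j) := by
  rw [bind_pure_comp, List.map_eq_map, List.map_map]
  rfl

lemma List.prod_map_range_mul_eq_mul_prod {M : Type*} [Monoid M] (f : ℤ → M) (a : ℤ)
    (P : ℕ) :
    ((List.range P).map fun j : ℕ => f (a + j)).prod * f (a + P)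
      = f a * ((List.range P).map fun j : ℕ => f (a + 1 + j)).prod := by
  have h := (List.prod_range_succ (fun j : ℕ => f (a + j)) P).symm.trans
    (List.prod_range_succ' (fun j : ℕ => f (a + j)) P)
  simpa [add_assoc, add_comm (1 : ℤ)] using h

theorem Matrix.nonsing_inv_mul_prod_mul_eq_of_intertwine {ι R : Type*} [Fintype ι]
    [DecidableEq ι] [CommRing R] (L M : ℤ → Matrix ι ι R) (P : ℕ)
    (hM : ∀ m, IsUnit (M m).det)
    (hLM : ∀ m, L (m + 1 - P) * M (m + 1) = M m * L (m + 1)) (n : ℤ) :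
    (M n)⁻¹ * ((List.range P).map fun j : ℕ => L (n - P + 1 + j)).prod * L (n + 1)
      = L (n + 1) * ((M (n + 1))⁻¹ *
          ((List.range P).map fun j : ℕ => L (n + 1 - P + 1 + j)).prod) := by
  have hconj : (M n)⁻¹ * L (n + 1 - P) = L (n + 1) * (M (n + 1))⁻¹ := by
    calc (M n)⁻¹ * L (n + 1 - P)
        = (M n)⁻¹ * (L (n + 1 - P) * M (n + 1)) * (M (n + 1))⁻¹ := by
          rw [← mul_assoc, Matrix.mul_nonsing_inv_cancel_right _ _ (hM _)]
      _ = L (n + 1) * (M (n + 1))⁻¹ := by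
          rw [hLM, Matrix.nonsing_inv_mul_cancel_left _ _ (hM n)]
  have hshift := List.prod_map_range_mul_eq_mul_prod L (n + 1 - P) P
  rw [show n + 1 - P + P = n + 1 by ring, show n + 1 - (P : ℤ) = n - P + 1 by ring] at hshift
  rw [mul_assoc, hshift, ← mul_assoc, show n - (P : ℤ) + 1 = n + 1 - P by ring, hconj,
    mul_assoc]

theorem laxM_det {K : Type*} [Field K] (α u v η : K) : (laxM α u v η).det = 1 - α * η := by
  rw [laxM, Matrix.det_fin_two_of]
  ring

-- `a, b, c, d, e, f` stand for `v_n, v_{n+P}, v_{n+1-P}, v_{n-P}, v_{n+P-1}, v_{n+1}`.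
theorem laxL_mul_laxM_of_toda {K : Type*} [Field K] {α a b c d e f : K} (hα : α ≠ 0)
    (ha : a ≠ 0) (hb : b ≠ 0)
    (htoda : a / b - d / a + α ^ 2 * (e / a - a / c) = 0) (η : K) :
    laxL (α * a / c + α⁻¹ * (d / a - 1)) a η * laxM α b f η
      = laxM α e a η * laxL (α * b / f + α⁻¹ * (a / b - 1)) b η := by
  have hd : d = a ^ 2 / b + α ^ 2 * (e - a ^ 2 / c) := by
    field_simp at htoda ⊢
    linear_combination -htoda
  subst hd
  simp only [laxL, laxM, Matrix.mul_fin_two, EmbeddingLike.apply_eq_iff_eq,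
    Matrix.vecCons_inj, and_true]
  refine ⟨⟨?_, ?_⟩, ?_, ?_⟩ <;> field_simp <;> ring

theorem toda_reduction_lax_equation_general {K : Type*} [Field K] (P : ℕ)
    (α : K) (hα : α ≠ 0)
    (v : ℤ → K) (hv : ∀ n, v n ≠ 0)
    (htoda : ∀ n : ℤ, v n / v (n + P) - v (n - P) / v n +
      α ^ 2 * (v (n + P - 1) / v n - v n / v (n + 1 - P)) = 0)
    (p : ℤ → K)
    (hp : ∀ n : ℤ, p n = α * v n / v (n - P + 1) + α⁻¹ * (v (n - P) / v n - 1))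
    (Lm : ℤ → K → Matrix (Fin 2) (Fin 2) K)
    (hL : ∀ (n : ℤ) (η : K), Lm n η = laxL (p n) (v n) η)
    (Mm : ℤ → K → Matrix (Fin 2) (Fin 2) K)
    (hM : ∀ (n : ℤ) (η : K), Mm n η = laxM α (v n) (v (n - P + 1)) η)
    (Mon : ℤ → K → Matrix (Fin 2) (Fin 2) K)
    (hMon : ∀ (n : ℤ) (η : K), Mon n η =
      (1 - α * η) • ((Mm n η)⁻¹ *
        ((List.range P).map (fun j => Lm (n - P + 1 + j) η)).prod)) :
    (∀ (n : ℤ) (η : K), Lm n η * Mm (n + P) η = Mm (n + P - 1) η * Lm (n + P) η) ∧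
    (∀ η : K, α * η ≠ 1 → ∀ n : ℤ,
      Mon n η * Lm (n + 1) η = Lm (n + 1) η * Mon (n + 1) η) := by
  have hlax : ∀ (n : ℤ) (η : K),
      Lm n η * Mm (n + P) η = Mm (n + P - 1) η * Lm (n + P) η := by
    intro n η
    have htoda_n := htoda n
    rw [show n + 1 - (P : ℤ) = n - P + 1 by ring] at htoda_n
    rw [hL, hL, hM, hM, hp, hp, show n + (P : ℤ) - P + 1 = n + 1 by ring,
      show n + (P : ℤ) - P = n by ring, show n + (P : ℤ) - 1 - P + 1 = n by ring]
    exact laxL_mul_laxM_of_toda hα (hv n) (hv (n + P)) htoda_n η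
  refine ⟨hlax, fun η hη n => ?_⟩
  have hdet : ∀ m, IsUnit (Mm m η).det := fun m => by
    rw [hM, laxM_det]
    exact (sub_ne_zero.2 hη.symm).isUnit
  have hLM : ∀ m : ℤ, Lm (m + 1 - P) η * Mm (m + 1) η = Mm m η * Lm (m + 1) η := fun m => by
    simpa using hlax (m + 1 - P) η
  rw [hMon, hMon, List.map_coe_range_eq, List.map_coe_range_eq, Matrix.smul_mul,
    Matrix.mul_smul,
    Matrix.nonsing_inv_mul_prod_mul_eq_of_intertwine (Lm · η) (Mm · η) P hdet hLM n]

/-- for a solution of the `(1,-P)` reduction of the discrete Toda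
equation, the reduced Lax matrices satisfy `L_n M_{n+P} = M_{n+P-1} L_{n+P}`, and the
monodromy matrix `𝓜_n(η) = (1-αη) M_n(η)⁻¹ L_{n-P+1}(η) ⋯ L_n(η)` satisfies the
discrete Lax equation `𝓜_n L_{n+1} = L_{n+1} 𝓜_{n+1}`. -/
theorem toda_reduction_lax_equation {K : Type*} [Field K] (P : ℕ) (hP : 2 ≤ P)
    (α : K) (hα : α ≠ 0)
    (v : ℤ → K) (hv : ∀ n, v n ≠ 0)
    (htoda : ∀ n : ℤ, v n / v (n + P) - v (n - P) / v n +
      α ^ 2 * (v (n + P - 1) / v n - v n / v (n + 1 - P)) = 0)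
    (p : ℤ → K)
    (hp : ∀ n : ℤ, p n = α * v n / v (n - P + 1) + α⁻¹ * (v (n - P) / v n - 1))
    (Lm : ℤ → K → Matrix (Fin 2) (Fin 2) K)
    (hL : ∀ (n : ℤ) (η : K), Lm n η = laxL (p n) (v n) η)
    (Mm : ℤ → K → Matrix (Fin 2) (Fin 2) K)
    (hM : ∀ (n : ℤ) (η : K), Mm n η = laxM α (v n) (v (n - P + 1)) η)
    (Mon : ℤ → K → Matrix (Fin 2) (Fin 2) K)
    (hMon : ∀ (n : ℤ) (η : K), Mon n η =
      (1 - α * η) • ((Mm n η)⁻¹ *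
        ((List.range P).map (fun j => Lm (n - P + 1 + j) η)).prod)) :
    (∀ (n : ℤ) (η : K), Lm n η * Mm (n + P) η = Mm (n + P - 1) η * Lm (n + P) η) ∧
    (∀ η : K, α * η ≠ 1 → ∀ n : ℤ,
      Mon n η * Lm (n + 1) η = Lm (n + 1) η * Mon (n + 1) η) :=
  toda_reduction_lax_equation_general P α hα v hv htoda p hp Lm hL Mm hM Mon hMon
end

section
/- Let K be a field, N ≥ 3 an ODD integer, and α ∈ K. Suppose u : ℤ → K with u_n ≠ 0 for all n, and γ : ℤ → K with γ_{n+2} = γ_n for all n, satisfy the U-system ∏_{j=0}^{N−1} u_{n+j} = γ_n·∏_{k=0}^{(N−3)/2} u_{n+2k+1} + α for all n ∈ ℤ. Then u satisfies the lifted DTKQ equation of order N+1 with parameter α for all n ∈ ℤ. (This expresses the commutativity φ ∘ π̂₁ = π̂₁ ∘ ψ of the diagram of Theorem: the birational map π̂₁ sends orbits of the U-system map ψ to orbits of the lifted DTKQ map φ.) -/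
/-!
Write `N = 2m + 1`, `P n = u n ⋯ u (n + N - 1)`, `Q n = u (n + 1) u (n + 3) ⋯ u (n + 2m - 1)` and
`A n = u (n + 1) ⋯ u (n + N - 1)`. The U-system says `γ n = (P n - α) / Q n`; since `γ` is
2-periodic and `Q n * u (n + N) = u (n + 1) * Q (n + 2)`, eliminating `γ` gives
`(P n - α) * u (n + N) = (P (n + 2) - α) * u (n + 1)`. With `P n = u n * A n`,
`P (n + 2) = A (n + 1) * u (n + N + 1)` and `A n * u (n + N) = u (n + 1) * A (n + 1)`, dividing
by the last product yields `u n - α / A n = u (n + N + 1) - α / A (n + 1)`.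
-/

open Finset

section ShiftedProducts

variable {M : Type*} [CommMonoid M] (f : ℤ → M) (n : ℤ) (k : ℕ)

theorem prod_range_succ_int_eq_mul_prod_shift :
    ∏ j ∈ range (k + 1), f (n + j) = f n * ∏ j ∈ range k, f (n + j + 1) := by
  rw [prod_range_succ', mul_comm]
  push_cast
  simp only [add_zero, add_assoc]

theorem prod_range_succ_int_eq_prod_shift_mul (d : ℤ) :
    ∏ j ∈ range (k + 1), f (n + d + j) = (∏ j ∈ range k, f (n + j + d)) * f (n + k + d) := by
  rw [prod_range_succ]
  simp only [add_right_comm n d]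

theorem prod_range_shift_mul_eq_mul_prod_range_shift :
    (∏ j ∈ range k, f (n + j + 1)) * f (n + k + 1) =
      f (n + 1) * ∏ j ∈ range k, f (n + j + 2) := by
  rw [← prod_range_succ (fun j : ℕ => f (n + j + 1)), prod_range_succ', mul_comm]
  push_cast
  simp only [add_zero, add_assoc, one_add_one_eq_two]

theorem prod_range_odd_mul_eq_mul_prod_range_odd :
    (∏ j ∈ range k, f (n + 2 * j + 1)) * f (n + 2 * k + 1) =
      f (n + 1) * ∏ j ∈ range k, f (n + 2 + 2 * j + 1) := by
  rw [← prod_range_succ (fun j : ℕ => f (n + 2 * j + 1)), prod_range_succ', mul_comm]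
  push_cast
  congr 1
  · simp
  · exact prod_congr rfl fun j _ => by ring_nf

end ShiftedProducts

section Field

variable {K : Type*} [Field K]

theorem sub_add_mul_one_div_sub_one_div_eq_zero {A B u₀ u₁ uN uN₁ α : K}
    (hA : A ≠ 0) (hB : B ≠ 0) (huN : uN ≠ 0) (hwin : A * uN = u₁ * B)
    (h : (u₀ * A - α) * uN = (B * uN₁ - α) * u₁) :
    uN₁ - u₀ + α * (1 / A - 1 / B) = 0 := by
  have key : ((uN₁ - u₀) * A * B + α * B - α * A) * uN = 0 := by
    linear_combination (-B) * h + (B * uN₁ - α) * hwin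
  calc uN₁ - u₀ + α * (1 / A - 1 / B)
      = ((uN₁ - u₀) * A * B + α * B - α * A) * uN / (A * B * uN) := by field_simp; ring
    _ = 0 := by rw [key, zero_div]

theorem prod_range_sub_mul_eq_of_usystem (m : ℕ) (α : K) (u : ℤ → K) (hu : ∀ n, u n ≠ 0)
    (γ : ℤ → K) (hper : ∀ n : ℤ, γ (n + 2) = γ n)
    (hU : ∀ n : ℤ,
      ∏ j ∈ range (2 * m + 1), u (n + j) = γ n * ∏ k ∈ range m, u (n + 2 * k + 1) + α)
    (n : ℤ) :
    (∏ j ∈ range (2 * m + 1), u (n + j) - α) * u (n + 2 * m + 1) =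
      (∏ j ∈ range (2 * m + 1), u (n + 2 + j) - α) * u (n + 1) := by
  set Q := ∏ k ∈ range m, u (n + 2 * k + 1)
  have hQ : Q ≠ 0 := prod_ne_zero_iff.mpr fun _ _ => hu _
  have hshift := prod_range_odd_mul_eq_mul_prod_range_odd u n m
  have h₂ := hU (n + 2)
  rw [hper] at h₂
  refine mul_left_cancel₀ hQ ?_
  linear_combination Q * u (n + 2 * m + 1) * hU n - Q * u (n + 1) * h₂ + γ n * Q * hshift

end Field

theorem usystem_odd_to_lifted_dtkq_general {K : Type*} [Field K] (N : ℕ)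
    (hNodd : Odd N) (α : K)
    (u : ℤ → K) (hu : ∀ n, u n ≠ 0)
    (γ : ℤ → K) (hper : ∀ n : ℤ, γ (n + 2) = γ n)
    (hUsys : ∀ n : ℤ,
      ∏ j ∈ Finset.range N, u (n + j) =
        γ n * ∏ k ∈ Finset.range ((N - 1) / 2), u (n + 2 * k + 1) + α) :
    ∀ n : ℤ,
      u (n + N + 1) - u n +
        α * (1 / ∏ j ∈ Finset.range (N - 1), u (n + j + 1) -
          1 / ∏ j ∈ Finset.range (N - 1), u (n + j + 2)) = 0 := by
  obtain ⟨m, rfl⟩ := hNodd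
  have hU : ∀ n : ℤ, ∏ j ∈ range (2 * m + 1), u (n + j) =
      γ n * ∏ k ∈ range m, u (n + 2 * k + 1) + α := by
    simpa [show (2 * m + 1 - 1) / 2 = m by omega] using hUsys
  intro n
  have h := prod_range_sub_mul_eq_of_usystem m α u hu γ hper hU n
  rw [prod_range_succ_int_eq_mul_prod_shift, prod_range_succ_int_eq_prod_shift_mul] at h
  have hwin := prod_range_shift_mul_eq_mul_prod_range_shift u n (2 * m)
  push_cast at h hwin
  rw [show n + ((2 * m + 1 : ℕ) : ℤ) + 1 = n + 2 * m + 2 by push_cast; ring, Nat.add_sub_cancel]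
  exact sub_add_mul_one_div_sub_one_div_eq_zero (prod_ne_zero_iff.mpr fun _ _ => hu _)
    (prod_ne_zero_iff.mpr fun _ _ => hu _) (hu _) hwin h

/-- for odd `N`, if `u` and 2-periodic `γ` satisfy the U-system
`∏_{j=0}^{N-1} u_{n+j} = γ_n ∏_{k=0}^{(N-3)/2} u_{n+2k+1} + α`, then `u` satisfies the
lifted DTKQ equation of order `N+1`. -/
theorem usystem_odd_to_lifted_dtkq {K : Type*} [Field K] (N : ℕ) (hN : 3 ≤ N)
    (hNodd : Odd N) (α : K)
    (u : ℤ → K) (hu : ∀ n, u n ≠ 0)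
    (γ : ℤ → K) (hper : ∀ n : ℤ, γ (n + 2) = γ n)
    (hUsys : ∀ n : ℤ,
      ∏ j ∈ Finset.range N, u (n + j) =
        γ n * ∏ k ∈ Finset.range ((N - 1) / 2), u (n + 2 * k + 1) + α) :
    ∀ n : ℤ,
      u (n + N + 1) - u n +
        α * (1 / ∏ j ∈ Finset.range (N - 1), u (n + j + 1) -
          1 / ∏ j ∈ Finset.range (N - 1), u (n + j + 2)) = 0 :=
  usystem_odd_to_lifted_dtkq_general N hNodd α u hu γ hper hUsys
end
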